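/- arXiv:2002.07673 — 10 statements merged into one kernel-verified Lean document; each statement's English description precedes it below -/
import Mathlib

section
/- Let A be a p×p entrywise nonnegative real matrix whose spectral radius is strictly less than 1, and let B be a p×q entrywise nonnegative real matrix. Then for every complex number z with |z| = 1 the matrix z·I − A (with A viewed as a complex matrix) is invertible, and for every vector d ∈ ℂ^q and every index i, the i-th entry of (z·I − A)⁻¹ B d satisfies |((z·I − A)⁻¹ B d)_i| ≤ ((I − A)⁻¹ B |d|)_i, where |d| denotes the vector of absolute values of the entries of d and (I − A)⁻¹ B |d| is computed over the reals. -/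
/-! Since the spectral radius of `A` is `< 1`, Gelfand's formula and the root test make the
Neumann series `∑ Aᵏ` converge, to `(I - A)⁻¹`. For `|z| ≥ 1` the resolvent is
`(zI - A)⁻¹ = ∑ z⁻⁽ᵏ⁺¹⁾ Aᵏ`, so, `A` being nonnegative, its entries are bounded in modulus by those
of `∑ Aᵏ = (I - A)⁻¹`. The triangle inequality and `B ≥ 0` then give the bound on
`(zI - A)⁻¹ B d`. -/

open Filter Matrix

theorem summable_of_eventually_rpow_one_div_le {f : ℕ → ℝ} (hf : ∀ n, 0 ≤ f n) {r : ℝ}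
    (hr₀ : 0 ≤ r) (hr : r < 1) (h : ∀ᶠ n : ℕ in atTop, f n ^ (1 / n : ℝ) ≤ r) : Summable f := by
  refine Summable.of_norm_bounded_eventually (summable_geometric_of_lt_one hr₀ hr) ?_
  rw [Nat.cofinite_eq_atTop]
  filter_upwards [h, eventually_ne_atTop 0] with n hn hn0
  rw [Real.norm_of_nonneg (hf n), ← Real.rpow_inv_natCast_pow (hf n) hn0, ← one_div]
  exact pow_le_pow_left₀ (Real.rpow_nonneg (hf n) _) hn n

theorem summable_norm_pow_of_spectralRadius_lt_one {A : Type*} [NormedRing A] [NormedAlgebra ℂ A]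
    [CompleteSpace A] {a : A} (h : spectralRadius ℂ a < 1) : Summable (‖a ^ ·‖) := by
  obtain ⟨r, hρr, hr1⟩ := ENNReal.lt_iff_exists_nnreal_btwn.1 h
  refine summable_of_eventually_rpow_one_div_le (fun n => norm_nonneg _) r.2
    (by exact_mod_cast hr1) ?_
  filter_upwards [(spectrum.pow_norm_pow_one_div_tendsto_nhds_spectralRadius a).eventually_lt_const
    hρr] with n hn
  rw [← ENNReal.ofReal_coe_nnreal] at hn
  exact (ENNReal.ofReal_lt_ofReal_iff_of_nonneg (by positivity)).1 hn |>.le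

section

-- Any algebra norm would do: summability only depends on the topology of the matrices.
attribute [local instance] Matrix.linftyOpNormedRing Matrix.linftyOpNormedAlgebra

theorem Matrix.summable_pow_of_forall_norm_lt_one {n : Type*} [Fintype n] [DecidableEq n]
    {M : Matrix n n ℂ} (h : ∀ μ ∈ spectrum ℂ M, ‖μ‖ < 1) : Summable (M ^ ·) := by
  cases isEmpty_or_nonempty n
  · simp [Subsingleton.elim _ (0 : Matrix n n ℂ)]
  have hρ : spectralRadius ℂ M < 1 := by
    simpa using spectrum.spectralRadius_lt_of_forall_lt M (r := 1) fun μ hμ => by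
      simpa [← NNReal.coe_lt_coe] using h μ hμ
  exact (summable_norm_pow_of_spectralRadius_lt_one hρ).of_norm

end

theorem Matrix.summable_iff_forall_summable_apply {ι m n R : Type*} [AddCommMonoid R]
    [TopologicalSpace R] {f : ι → Matrix m n R} :
    Summable f ↔ ∀ i j, Summable fun k => f k i j :=
  Pi.summable.trans (forall_congr' fun _ => Pi.summable)

theorem Matrix.tsum_apply_apply {ι m n R : Type*} [AddCommMonoid R] [TopologicalSpace R] [T2Space R]
    {f : ι → Matrix m n R} (hf : Summable f) (i : m) (j : n) :
    (∑' k, f k) i j = ∑' k, f k i j :=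
  (congrFun (tsum_apply hf) j).trans (tsum_apply (Pi.summable.1 hf i))

theorem Matrix.summable_map_ofReal {ι m n : Type*} {f : ι → Matrix m n ℝ} :
    Summable (fun k => (f k).map Complex.ofReal) ↔ Summable f := by
  simp only [Matrix.summable_iff_forall_summable_apply, map_apply, Complex.summable_ofReal]

theorem Matrix.map_ofReal_pow {n : Type*} [Fintype n] [DecidableEq n] (A : Matrix n n ℝ) (k : ℕ) :
    A.map Complex.ofReal ^ k = (A ^ k).map Complex.ofReal :=
  (A.map_pow Complex.ofRealHom k).symm

theorem Matrix.inv_one_sub_eq_tsum_pow {n R : Type*} [Fintype n] [DecidableEq n] [CommRing R]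
    [TopologicalSpace R] [IsTopologicalRing R] [T2Space R] {A : Matrix n n R}
    (h : Summable (A ^ ·)) : (1 - A)⁻¹ = ∑' k, A ^ k :=
  inv_eq_right_inv h.one_sub_mul_tsum_pow

theorem Matrix.norm_inv_smul_one_sub_map_ofReal_apply_le {n : Type*} [Fintype n] [DecidableEq n]
    {A : Matrix n n ℝ} (hA : ∀ i j, 0 ≤ A i j) (hS : Summable (A ^ ·)) {z : ℂ} (hz : 1 ≤ ‖z‖)
    (i j : n) : ‖(z • 1 - A.map Complex.ofReal)⁻¹ i j‖ ≤ (1 - A)⁻¹ i j := by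
  have hz0 : z ≠ 0 := norm_pos_iff.1 (one_pos.trans_le hz)
  set b := z⁻¹ • A.map Complex.ofReal with hb_def
  have hbound : ∀ k i' j', ‖(b ^ k) i' j'‖ ≤ (A ^ k) i' j' := fun k i' j' => by
    rw [hb_def, smul_pow, map_ofReal_pow, smul_apply, map_apply, smul_eq_mul, norm_mul, norm_pow,
      Complex.norm_real, Real.norm_of_nonneg (pow_apply_nonneg hA k i' j')]
    refine mul_le_of_le_one_left (pow_apply_nonneg hA k i' j') (pow_le_one₀ (norm_nonneg _) ?_)
    rw [norm_inv]
    exact inv_le_one_of_one_le₀ hz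
  have hb : Summable (b ^ ·) := summable_iff_forall_summable_apply.2 fun i' j' =>
    .of_norm_bounded (summable_iff_forall_summable_apply.1 hS i' j') (hbound · i' j')
  have hfactor : z • 1 - A.map Complex.ofReal = z • (1 - b) := by
    rw [smul_sub, hb_def, smul_smul, mul_inv_cancel₀ hz0, one_smul]
  have hinv : (z • 1 - A.map Complex.ofReal)⁻¹ = z⁻¹ • ∑' k, b ^ k := by
    refine inv_eq_right_inv ?_
    rw [hfactor, smul_mul_smul_comm, mul_inv_cancel₀ hz0, one_smul, hb.one_sub_mul_tsum_pow]
  rw [hinv, inv_one_sub_eq_tsum_pow hS, smul_apply, tsum_apply_apply hb, tsum_apply_apply hS,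
    norm_smul, norm_inv]
  calc ‖z‖⁻¹ * ‖∑' k, (b ^ k) i j‖ ≤ ‖∑' k, (b ^ k) i j‖ :=
        mul_le_of_le_one_left (norm_nonneg _) (inv_le_one_of_one_le₀ hz)
    _ ≤ ∑' k, (A ^ k) i j :=
        tsum_of_norm_bounded (summable_iff_forall_summable_apply.1 hS i j).hasSum (hbound · i j)

theorem Matrix.norm_mulVec_apply_le {m n R : Type*} [Fintype n] [SeminormedRing R]
    {M : Matrix m n R} {N : Matrix m n ℝ} {v : n → R} {w : n → ℝ} {i : m}
    (hMN : ∀ j, ‖M i j‖ ≤ N i j) (hvw : ∀ j, ‖v j‖ ≤ w j) : ‖(M *ᵥ v) i‖ ≤ (N *ᵥ w) i :=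
  calc ‖(M *ᵥ v) i‖ ≤ ∑ j, ‖M i j * v j‖ := norm_sum_le _ _
    _ ≤ ∑ j, N i j * w j := Finset.sum_le_sum fun j _ => (norm_mul_le _ _).trans
        (mul_le_mul (hMN j) (hvw j) (norm_nonneg _) ((norm_nonneg _).trans (hMN j)))

/-- If `A` is an entrywise nonnegative `p × p` real matrix whose spectral
radius is `< 1` (i.e. every complex eigenvalue has modulus `< 1`) and `B` is an entrywise
nonnegative `p × q` real matrix, then for every `z` on the complex unit circle the matrix
`z • I - A` is invertible and `|((z • I - A)⁻¹ B d)_i| ≤ ((I - A)⁻¹ B |d|)_i` for every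
complex vector `d` and index `i`. -/
theorem stmt0 (p q : ℕ) (A : Matrix (Fin p) (Fin p) ℝ) (B : Matrix (Fin p) (Fin q) ℝ)
    (hA : ∀ i j, 0 ≤ A i j) (hB : ∀ i j, 0 ≤ B i j)
    (hsr : ∀ μ ∈ spectrum ℂ (A.map (Complex.ofReal)), ‖μ‖ < 1) :
    ∀ z : ℂ, ‖z‖ = 1 →
      IsUnit (z • (1 : Matrix (Fin p) (Fin p) ℂ) - A.map Complex.ofReal) ∧
      ∀ (d : Fin q → ℂ) (i : Fin p),
        ‖(((z • (1 : Matrix (Fin p) (Fin p) ℂ) - A.map Complex.ofReal)⁻¹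
                * B.map Complex.ofReal).mulVec d i)‖
          ≤ ((1 - A)⁻¹ * B).mulVec (fun k => ‖d k‖) i := by
  intro z hz
  have hunit : IsUnit (z • (1 : Matrix (Fin p) (Fin p) ℂ) - A.map Complex.ofReal) := by
    rw [← Algebra.algebraMap_eq_smul_one, ← spectrum.notMem_iff]
    exact fun hz_mem => (hsr z hz_mem).ne hz
  refine ⟨hunit, fun d i => ?_⟩
  have hS : Summable (A ^ ·) := summable_map_ofReal.1 <| by
    simpa only [map_ofReal_pow] using summable_pow_of_forall_norm_lt_one hsr
  rw [← mulVec_mulVec, ← mulVec_mulVec]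
  refine norm_mulVec_apply_le (fun j => norm_inv_smul_one_sub_map_ofReal_apply_le hA hS hz.ge i j)
    fun j => norm_mulVec_apply_le (fun k => ?_) fun _ => le_rfl
  simp [abs_of_nonneg (hB j k)]
end

section
/- Let A be a p×p entrywise nonnegative real matrix whose spectral radius is strictly less than 1, and let B be a p×q entrywise nonnegative real matrix. Then for every complex number z with |z| = 1, the operator 2-norm satisfies ‖(z·I − A)⁻¹ B‖₂ ≤ ‖(I − A)⁻¹ B‖₂, where on the left the matrices are viewed over ℂ and the norm is the operator norm induced by the Euclidean norms; that is, the supremum over the unit circle of ‖(z·I − A)⁻¹ B‖₂ is attained at z = 1. -/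
/-!
For `‖z‖ ≥ 1` the spectral radius bound and Gelfand's formula make the Neumann series
`(z • 1 - A)⁻¹ = ∑ z⁻¹ ^ (k + 1) • A ^ k` converge; since `A ^ k ≥ 0` entrywise, every entry of
`(z • 1 - A)⁻¹` is bounded in modulus by the corresponding entry `∑ (A ^ k) i j` of `(1 - A)⁻¹`.
Such an entrywise domination by a real matrix survives multiplication by `B ≥ 0`, and it
bounds the `ℓ²` operator norm: `‖M x‖ ≤ ‖N |x|‖` coordinatewise, where `|x|` has the same norm
as `x`.
-/

open Matrix

/-- The operator norm of a matrix induced by the Euclidean (`ℓ²`) norms on the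
domain and codomain. -/
noncomputable def opNorm2 {𝕜 : Type*} [RCLike 𝕜] {m n : Type*} [Fintype m] [Fintype n]
    [DecidableEq n] (M : Matrix m n 𝕜) : ℝ :=
  ‖LinearMap.toContinuousLinearMap (Matrix.toEuclideanLin M)‖

open Filter
open scoped NNReal

-- Any Banach-algebra norm on matrices will do: it only enters through Gelfand's formula.
attribute [local instance] Matrix.linftyOpNormedAddCommGroup Matrix.linftyOpNormedRing
  Matrix.linftyOpNormedAlgebra

section BanachAlgebra

variable {𝔸 : Type*} [NormedRing 𝔸] [NormedAlgebra ℂ 𝔸] [CompleteSpace 𝔸]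

theorem spectralRadius_lt_one_of_forall_norm_lt_one {a : 𝔸}
    (h : ∀ μ ∈ spectrum ℂ a, ‖μ‖ < 1) : spectralRadius ℂ a < 1 := by
  rcases (spectrum ℂ a).eq_empty_or_nonempty with hempty | hne
  · simp [spectralRadius, hempty]
  · exact_mod_cast spectrum.spectralRadius_lt_of_forall_lt_of_nonempty hne fun μ hμ => by
      exact_mod_cast h μ hμ

theorem eventually_norm_pow_le_of_spectralRadius_lt {a : 𝔸} {r : ℝ≥0}
    (h : spectralRadius ℂ a < r) : ∀ᶠ n : ℕ in atTop, ‖a ^ n‖ ≤ r ^ n := by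
  filter_upwards
    [(spectrum.pow_nnnorm_pow_one_div_tendsto_nhds_spectralRadius a).eventually_lt_const h,
      eventually_ne_atTop 0] with n hn hn0
  rw [one_div, ENNReal.rpow_inv_lt_iff (by positivity), ENNReal.rpow_natCast] at hn
  exact_mod_cast hn.le

theorem summable_norm_pow_of_spectralRadius_lt_one_s1 {a : 𝔸} (h : spectralRadius ℂ a < 1) :
    Summable fun n => ‖a ^ n‖ := by
  obtain ⟨r, hr, hr1⟩ := ENNReal.lt_iff_exists_nnreal_btwn.mp h
  refine (summable_geometric_of_lt_one r.coe_nonneg (by exact_mod_cast hr1))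
    |>.of_norm_bounded_eventually_nat ?_
  simpa using eventually_norm_pow_le_of_spectralRadius_lt hr

theorem summable_smul_pow_of_spectralRadius_lt_one {a : 𝔸} (h : spectralRadius ℂ a < 1)
    {w : ℂ} (hw : ‖w‖ ≤ 1) : Summable fun n => (w • a) ^ n :=
  (summable_norm_pow_of_spectralRadius_lt_one_s1 h).of_norm_bounded fun n => by
    rw [smul_pow]
    exact (norm_smul_le _ _).trans
      (mul_le_of_le_one_left (norm_nonneg _) (by simpa using pow_le_one₀ (norm_nonneg w) hw))

end BanachAlgebra

namespace Matrix

section Entrywise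

variable {l m n 𝕜 : Type*} [SeminormedRing 𝕜]

theorem norm_mulVec_apply_le_s1 [Fintype n] {M : Matrix m n 𝕜} {N : Matrix m n ℝ}
    (h : ∀ i j, ‖M i j‖ ≤ N i j) (v : n → 𝕜) (i : m) :
    ‖(M *ᵥ v) i‖ ≤ (N *ᵥ fun j => ‖v j‖) i :=
  (norm_sum_le _ _).trans <| Finset.sum_le_sum fun j _ =>
    (norm_mul_le _ _).trans (mul_le_mul_of_nonneg_right (h i j) (norm_nonneg _))

theorem norm_mul_apply_le [Fintype m] {M : Matrix l m 𝕜} {M' : Matrix m n 𝕜}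
    {N : Matrix l m ℝ} {N' : Matrix m n ℝ} (h : ∀ i k, ‖M i k‖ ≤ N i k)
    (h' : ∀ k j, ‖M' k j‖ ≤ N' k j) (i : l) (j : n) : ‖(M * M') i j‖ ≤ (N * N') i j :=
  (norm_sum_le _ _).trans <| Finset.sum_le_sum fun k _ => (norm_mul_le _ _).trans <|
    mul_le_mul (h i k) (h' k j) (norm_nonneg _) ((norm_nonneg _).trans (h i k))

end Entrywise

variable {n : Type*} [Fintype n] [DecidableEq n]

theorem map_inv {K L : Type*} [Field K] [Field L] (f : K →+* L) (M : Matrix n n K) :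
    M⁻¹.map f = (M.map f)⁻¹ := by
  have hdet : f M.det = (M.map f).det := f.map_det M
  have hadj : M.adjugate.map f = (M.map f).adjugate := f.map_adjugate M
  ext i j
  simp [inv_def, ← hdet, ← hadj]

theorem hasSum_inv_smul_one_sub {K : Type*} [Field K] [TopologicalSpace K] [IsTopologicalRing K]
    [T2Space K] {A : Matrix n n K} {z : K} (hz : z ≠ 0) (h : Summable fun k => (z⁻¹ • A) ^ k) :
    HasSum (fun k => z⁻¹ ^ (k + 1) • A ^ k) (z • 1 - A)⁻¹ := by
  have hinv : (z • 1 - A)⁻¹ = z⁻¹ • ∑' k, (z⁻¹ • A) ^ k := by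
    refine inv_eq_right_inv ?_
    calc (z • 1 - A) * (z⁻¹ • ∑' k, (z⁻¹ • A) ^ k)
        = (1 - z⁻¹ • A) * ∑' k, (z⁻¹ • A) ^ k := by
          rw [mul_smul_comm, ← smul_mul_assoc, smul_sub, smul_smul, inv_mul_cancel₀ hz, one_smul]
      _ = 1 := h.one_sub_mul_tsum_pow
  rw [hinv]
  convert h.hasSum.const_smul z⁻¹ using 1
  funext k
  rw [smul_pow, smul_smul, pow_succ']

theorem norm_inv_smul_one_sub_apply_le {A : Matrix n n ℝ} (hA : ∀ i j, 0 ≤ A i j)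
    (hρ : spectralRadius ℂ (A.map Complex.ofReal) < 1) {z : ℂ} (hz : 1 ≤ ‖z‖) (i j : n) :
    ‖(z • 1 - A.map Complex.ofReal)⁻¹ i j‖ ≤ (1 - A)⁻¹ i j := by
  have hz0 : z ≠ 0 := norm_pos_iff.mp (one_pos.trans_le hz)
  have hw : ‖z⁻¹‖ ≤ 1 := by rw [norm_inv]; exact inv_le_one_of_one_le₀ hz
  have hpow (k : ℕ) : A.map Complex.ofReal ^ k = (A ^ k).map Complex.ofReal :=
    (Complex.ofRealHom.mapMatrix.map_pow A k).symm
  have hresolvent :=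
    hasSum_inv_smul_one_sub hz0 (summable_smul_pow_of_spectralRadius_lt_one hρ hw)
  have hneumann : HasSum (fun k => (A ^ k) i j) ((1 - A)⁻¹ i j) := by
    have h := hasSum_inv_smul_one_sub one_ne_zero
      (summable_smul_pow_of_spectralRadius_lt_one hρ (by simp))
    have hmap : (1 - A.map Complex.ofReal)⁻¹ = (1 - A)⁻¹.map Complex.ofReal := by
      have h1 : 1 - A.map Complex.ofReal = Complex.ofRealHom.mapMatrix (1 - A) := by
        rw [map_sub, map_one]
        rfl
      rw [h1, RingHom.mapMatrix_apply, ← map_inv]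
      rfl
    simp only [inv_one, one_pow, one_smul, hpow, hmap] at h
    exact Complex.hasSum_ofReal.mp (Pi.hasSum.mp (Pi.hasSum.mp h i) j)
  rw [← (Pi.hasSum.mp (Pi.hasSum.mp hresolvent i) j).tsum_eq]
  refine tsum_of_norm_bounded hneumann fun k => ?_
  have hAk := pow_apply_nonneg hA k i j
  calc ‖(z⁻¹ ^ (k + 1) • A.map Complex.ofReal ^ k) i j‖ = ‖z⁻¹‖ ^ (k + 1) * (A ^ k) i j := by
        simp [hpow, abs_of_nonneg hAk]
    _ ≤ (A ^ k) i j := mul_le_of_le_one_left hAk (pow_le_one₀ (norm_nonneg _) hw)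

end Matrix

theorem opNorm2_le_of_norm_le {𝕜 : Type*} [RCLike 𝕜] {m n : Type*} [Fintype m] [Fintype n]
    [DecidableEq n] {M : Matrix m n 𝕜} {N : Matrix m n ℝ} (h : ∀ i j, ‖M i j‖ ≤ N i j) :
    opNorm2 M ≤ opNorm2 N := by
  refine ContinuousLinearMap.opNorm_le_bound _ (norm_nonneg _) fun x => ?_
  set y : EuclideanSpace ℝ n := WithLp.toLp 2 fun j => ‖x j‖
  have hy : ‖y‖ = ‖x‖ := by simp [y, EuclideanSpace.norm_eq]
  calc ‖LinearMap.toContinuousLinearMap (toEuclideanLin M) x‖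
      ≤ ‖LinearMap.toContinuousLinearMap (toEuclideanLin N) y‖ := by
        simp only [LinearMap.coe_toContinuousLinearMap', toLpLin_apply, EuclideanSpace.norm_eq]
        gcongr with i
        exact (norm_mulVec_apply_le_s1 h _ i).trans (le_abs_self _)
    _ ≤ opNorm2 N * ‖y‖ := ContinuousLinearMap.le_opNorm _ _
    _ = opNorm2 N * ‖x‖ := by rw [hy]

/-- If `A` is an entrywise nonnegative `p × p` real matrix with spectral
radius `< 1` and `B` is an entrywise nonnegative `p × q` real matrix, then for every `z`
on the complex unit circle, `‖(z • I - A)⁻¹ B‖₂ ≤ ‖(I - A)⁻¹ B‖₂`; i.e. the supremum over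
the unit circle of the operator 2-norm is attained at `z = 1`. -/
theorem stmt1 (p q : ℕ) (A : Matrix (Fin p) (Fin p) ℝ) (B : Matrix (Fin p) (Fin q) ℝ)
    (hA : ∀ i j, 0 ≤ A i j) (hB : ∀ i j, 0 ≤ B i j)
    (hsr : ∀ μ ∈ spectrum ℂ (A.map (Complex.ofReal)), ‖μ‖ < 1) :
    ∀ z : ℂ, ‖z‖ = 1 →
      opNorm2 ((z • (1 : Matrix (Fin p) (Fin p) ℂ) - A.map Complex.ofReal)⁻¹
          * B.map Complex.ofReal)
        ≤ opNorm2 ((1 - A)⁻¹ * B) := by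
  intro z hz
  have hρ := spectralRadius_lt_one_of_forall_norm_lt_one hsr
  refine opNorm2_le_of_norm_le
    (norm_mul_apply_le (norm_inv_smul_one_sub_apply_le hA hρ hz.ge) fun k j => ?_)
  simp [abs_of_nonneg (hB k j)]
end

section
/- Let A be a p×p entrywise nonnegative real matrix with spectral radius strictly less than 1, let B be a p×q entrywise nonnegative real matrix, and let 0 ≤ r ≤ 1 be a real number such that for every row index i one has Σ_j A_{ij} + Σ_k B_{ik} ≤ r. Then every row sum of (I − A)⁻¹ B is at most r; that is, ((I − A)⁻¹ B 𝟙)_i ≤ r for every i, where 𝟙 is the all-ones vector in ℝ^q. -/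
/-!
Write `C = (I - A)⁻¹`. Since `A ^ n → 0` (Gelfand's formula), `C = Σ_{k ≥ 0} A ^ k` is
entrywise nonnegative, so `C` preserves the entrywise order on vectors. The row-sum hypothesis
together with `r ≤ 1` gives `B 𝟙 ≤ (I - A)(r 𝟙)`, and applying `C` yields `C B 𝟙 ≤ r 𝟙`.
-/

open Matrix Filter Topology
open scoped NNReal

theorem tendsto_pow_atTop_nhds_zero_of_spectralRadius_lt_one {A : Type*} [NormedRing A]
    [NormedAlgebra ℂ A] [CompleteSpace A] {a : A} (ha : spectralRadius ℂ a < 1) :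
    Tendsto (a ^ ·) atTop (𝓝 0) := by
  obtain ⟨c, hac, hc1⟩ := exists_between ha
  lift c to ℝ≥0 using (hc1.trans_le le_top).ne
  have hc1 : (c : ℝ) < 1 := by exact_mod_cast hc1
  have hgelfand := spectrum.pow_nnnorm_pow_one_div_tendsto_nhds_spectralRadius a
  have hbound : ∀ᶠ n : ℕ in atTop, ‖a ^ n‖ ≤ (c : ℝ) ^ n := by
    filter_upwards [hgelfand.eventually_lt_const hac, eventually_gt_atTop 0] with n hn hn0
    rw [one_div, ENNReal.rpow_inv_lt_iff (by positivity), ENNReal.rpow_natCast] at hn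
    exact_mod_cast hn.le
  exact squeeze_zero_norm' hbound (tendsto_pow_atTop_nhds_zero_of_lt_one c.coe_nonneg hc1)

theorem tendsto_geom_sum_of_tendsto_pow_zero {R : Type*} [Ring R] [TopologicalSpace R]
    [IsTopologicalRing R] {a b : R} (ha : Tendsto (a ^ ·) atTop (𝓝 0)) (hb : (1 - a) * b = 1) :
    Tendsto (fun n => ∑ k ∈ Finset.range n, a ^ k) atTop (𝓝 b) := by
  have hlim : Tendsto (fun n => (1 - a ^ n) * b) atTop (𝓝 ((1 - 0) * b)) :=
    (tendsto_const_nhds.sub ha).mul_const b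
  rw [sub_zero, one_mul] at hlim
  refine hlim.congr fun n => ?_
  rw [← geom_sum_mul_neg, mul_assoc, hb, mul_one]

namespace Matrix

variable {n : Type*} [Fintype n] [DecidableEq n]

section LinftyOpNorm

attribute [local instance] Matrix.linftyOpNormedAddCommGroup Matrix.linftyOpNormedRing
  Matrix.linftyOpNormedAlgebra

theorem tendsto_pow_atTop_nhds_zero_of_forall_mem_spectrum_norm_lt_one {A : Matrix n n ℝ}
    (hA : ∀ μ ∈ spectrum ℂ (A.map Complex.ofReal), ‖μ‖ < 1) :
    Tendsto (A ^ ·) atTop (𝓝 0) := by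
  cases isEmpty_or_nonempty n
  · simpa only [Subsingleton.elim _ (0 : Matrix n n ℝ)] using tendsto_const_nhds
  have hρ : spectralRadius ℂ (A.map Complex.ofReal) < 1 := by
    simpa using spectrum.spectralRadius_lt_of_forall_lt (A.map Complex.ofReal) (r := 1)
      fun μ hμ => by exact_mod_cast hA μ hμ
  have hre : ∀ k : ℕ, (A.map Complex.ofReal ^ k).map Complex.re = A ^ k := fun k => by
    have hpow : A.map Complex.ofReal ^ k = (A ^ k).map Complex.ofReal :=
      (map_pow Complex.ofRealHom.mapMatrix A k).symm
    rw [hpow, map_map]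
    ext i j
    simp
  have hcont : Continuous fun M : Matrix n n ℂ => M.map Complex.re :=
    continuous_id.matrix_map Complex.continuous_re
  simpa [Function.comp_def, hre] using
    (hcont.tendsto 0).comp (tendsto_pow_atTop_nhds_zero_of_spectralRadius_lt_one hρ)

end LinftyOpNorm

theorem isUnit_det_one_sub_of_one_notMem_spectrum {A : Matrix n n ℝ}
    (h : (1 : ℂ) ∉ spectrum ℂ (A.map Complex.ofReal)) : IsUnit (1 - A).det := by
  rw [spectrum.notMem_iff, map_one, isUnit_iff_isUnit_det] at h
  have : 1 - A.map Complex.ofReal = Complex.ofRealHom.mapMatrix (1 - A) := by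
    rw [map_sub, map_one]; rfl
  rwa [this, ← RingHom.map_det, isUnit_map_iff] at h

theorem nonsing_inv_one_sub_apply_nonneg {R : Type*} [CommRing R] [PartialOrder R]
    [IsOrderedRing R] [TopologicalSpace R] [IsTopologicalRing R] [ClosedIciTopology R]
    {A : Matrix n n R} (hA : ∀ i j, 0 ≤ A i j) (hpow : Tendsto (A ^ ·) atTop (𝓝 0))
    (hdet : IsUnit (1 - A).det) (i j : n) :
    0 ≤ (1 - A)⁻¹ i j := by
  have hlim := tendsto_geom_sum_of_tendsto_pow_zero hpow (mul_nonsing_inv _ hdet)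
  refine ge_of_tendsto' ((hlim.apply_nhds i).apply_nhds j) fun N => ?_
  rw [sum_apply]
  exact Finset.sum_nonneg fun k _ => pow_apply_nonneg hA k i j

omit [DecidableEq n] in
theorem mulVec_le_mulVec_of_nonneg {m R : Type*} [Semiring R] [PartialOrder R] [IsOrderedRing R]
    {M : Matrix m n R} (hM : ∀ i j, 0 ≤ M i j) {v w : n → R} (hvw : v ≤ w) :
    M *ᵥ v ≤ M *ᵥ w :=
  fun i => dotProduct_le_dotProduct_of_nonneg_left hvw (hM i)

end Matrix

theorem stmt2_general (p q : ℕ) (A : Matrix (Fin p) (Fin p) ℝ) (B : Matrix (Fin p) (Fin q) ℝ)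
    (hA : ∀ i j, 0 ≤ A i j)
    (hsr : ∀ μ ∈ spectrum ℂ (A.map (Complex.ofReal)), ‖μ‖ < 1)
    (r : ℝ) (hr1 : r ≤ 1)
    (hrow : ∀ i, (∑ j, A i j) + (∑ k, B i k) ≤ r) :
    ∀ i, ((1 - A)⁻¹ * B).mulVec (fun _ => (1 : ℝ)) i ≤ r := by
  have hdet : IsUnit (1 - A).det :=
    isUnit_det_one_sub_of_one_notMem_spectrum fun h1 => by simpa using hsr 1 h1
  have hC := nonsing_inv_one_sub_apply_nonneg hA
    (tendsto_pow_atTop_nhds_zero_of_forall_mem_spectrum_norm_lt_one hsr) hdet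
  have hB1 : B *ᵥ (fun _ => 1) ≤ (1 - A) *ᵥ (fun _ => r) := fun i => by
    have hrA : (∑ j, A i j) * r ≤ ∑ j, A i j :=
      mul_le_of_le_one_right (Finset.sum_nonneg fun j _ => hA i j) hr1
    rw [sub_mulVec, one_mulVec, Pi.sub_apply]
    simp only [mulVec, dotProduct, mul_one, ← Finset.sum_mul]
    linarith [hrow i]
  intro i
  calc (((1 - A)⁻¹ * B) *ᵥ fun _ => 1) i = ((1 - A)⁻¹ *ᵥ B *ᵥ fun _ => 1) i := by
        rw [mulVec_mulVec]
    _ ≤ ((1 - A)⁻¹ *ᵥ (1 - A) *ᵥ fun _ => r) i := mulVec_le_mulVec_of_nonneg hC hB1 i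
    _ = r := by rw [mulVec_mulVec, nonsing_inv_mul _ hdet, one_mulVec]

/-- If `A` is an entrywise nonnegative `p × p` real matrix with spectral
radius `< 1`, `B` is an entrywise nonnegative `p × q` real matrix, and `0 ≤ r ≤ 1` is such
that every combined row sum `Σ_j A i j + Σ_k B i k` is at most `r`, then every row sum of
`(I - A)⁻¹ B` is at most `r`. -/
theorem stmt2 (p q : ℕ) (A : Matrix (Fin p) (Fin p) ℝ) (B : Matrix (Fin p) (Fin q) ℝ)
    (hA : ∀ i j, 0 ≤ A i j) (hB : ∀ i j, 0 ≤ B i j)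
    (hsr : ∀ μ ∈ spectrum ℂ (A.map (Complex.ofReal)), ‖μ‖ < 1)
    (r : ℝ) (hr0 : 0 ≤ r) (hr1 : r ≤ 1)
    (hrow : ∀ i, (∑ j, A i j) + (∑ k, B i k) ≤ r) :
    ∀ i, ((1 - A)⁻¹ * B).mulVec (fun _ => (1 : ℝ)) i ≤ r :=
  stmt2_general p q A B hA hsr r hr1 hrow
end

section
/- Let A be a p×p entrywise nonnegative real matrix with spectral radius strictly less than 1, and let B be a p×q entrywise nonnegative real matrix. If for every row index i one has Σ_j A_{ij} + Σ_k B_{ik} ≤ 1/√p, then the operator 2-norm satisfies ‖(I − A)⁻¹ B‖₂ ≤ 1. -/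
/-!
Put `M = (1 - A)⁻¹ B`, so that `M = A M + B`. The absolute row sums `u i = ∑ k, |M i k|` then
satisfy `u ≤ A u + b` entrywise, where `b i = ∑ k, B i k`. At a row `i₀` where `u` is maximal,
with `r = ∑ j, A i₀ j`, this reads `(1 - r) u i₀ ≤ b i₀ ≤ (1 - r) / √p`, so every row of `M`
has `ℓ¹`-norm at most `1 / √p`, and `‖M‖₂ ≤ √p · maxᵢ ∑ k, |M i k| ≤ 1`.
Division by `1 - r` needs `r < 1`: this follows from `1 / √p < 1` when `p ≥ 2`, and from the
invertibility of `1 - A` (no eigenvalue `1`) when `p = 1`.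
-/
open Matrix Finset

lemma EuclideanSpace.norm_le_sqrt_card_mul {𝕜 ι : Type*} [RCLike 𝕜] [Fintype ι]
    {x : EuclideanSpace 𝕜 ι} {C : ℝ} (hC : 0 ≤ C) (hx : ∀ i, ‖x i‖ ≤ C) :
    ‖x‖ ≤ √(Fintype.card ι) * C := by
  rw [EuclideanSpace.norm_eq, ← Real.sqrt_sq hC, ← Real.sqrt_mul (Nat.cast_nonneg _)]
  gcongr
  calc ∑ i, ‖x i‖ ^ 2 ≤ ∑ _i : ι, C ^ 2 := by gcongr with i; exact hx i
    _ = _ := by simp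

lemma opNorm2_le_sqrt_card_mul {𝕜 m n : Type*} [RCLike 𝕜] [Fintype m] [Fintype n]
    [DecidableEq n] (M : Matrix m n 𝕜) {c : ℝ} (hc : 0 ≤ c)
    (hM : ∀ i, ∑ k, ‖M i k‖ ≤ c) :
    opNorm2 M ≤ √(Fintype.card m) * c := by
  refine ContinuousLinearMap.opNorm_le_bound _ (by positivity) fun x => ?_
  rw [mul_assoc]
  refine EuclideanSpace.norm_le_sqrt_card_mul (by positivity) fun i => ?_
  calc ‖(toEuclideanLin M x) i‖ = ‖∑ k, M i k * x k‖ := rfl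
    _ ≤ ∑ k, ‖M i k‖ * ‖x k‖ := norm_sum_le_of_le _ fun k _ => norm_mul_le _ _
    _ ≤ ∑ k, ‖M i k‖ * ‖x‖ := by gcongr with k; exact PiLp.norm_apply_le x k
    _ = (∑ k, ‖M i k‖) * ‖x‖ := (sum_mul ..).symm
    _ ≤ c * ‖x‖ := by gcongr; exact hM i

lemma Matrix.isUnit_one_sub_of_one_notMem_spectrum_map_ofReal {n : Type*} [Fintype n]
    [DecidableEq n] {A : Matrix n n ℝ} (h : (1 : ℂ) ∉ spectrum ℂ (A.map Complex.ofReal)) :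
    IsUnit (1 - A) := by
  have hmap : (1 - A).map Complex.ofReal = 1 - A.map Complex.ofReal := by
    rw [Matrix.map_sub _ Complex.ofReal_sub,
      Matrix.map_one _ Complex.ofReal_zero Complex.ofReal_one]
  have hdet : ((1 - A).map Complex.ofReal).det = ((1 - A).det : ℂ) :=
    (Complex.ofRealHom.map_det (1 - A)).symm
  rw [spectrum.notMem_iff, _root_.map_one, ← hmap, isUnit_iff_isUnit_det, hdet,
    isUnit_iff_ne_zero] at h
  rw [isUnit_iff_isUnit_det, isUnit_iff_ne_zero]
  exact_mod_cast h

/-- A discrete maximum principle: evaluate `u ≤ A u + b` at a maximiser of `u`. -/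
lemma Matrix.le_of_le_mulVec_add {m : Type*} [Fintype m] {A : Matrix m m ℝ} {u b : m → ℝ}
    {c : ℝ} (hA : ∀ i j, 0 ≤ A i j) (hA_row : ∀ i, ∑ j, A i j < 1)
    (hb : ∀ i, b i ≤ c * (1 - ∑ j, A i j)) (hu : ∀ i, u i ≤ (A *ᵥ u) i + b i) (i : m) :
    u i ≤ c := by
  have : Nonempty m := ⟨i⟩
  obtain ⟨i₀, hi₀⟩ := Finite.exists_max u
  have hmax : u i₀ ≤ (∑ j, A i₀ j) * u i₀ + b i₀ := calc
    u i₀ ≤ ∑ j, A i₀ j * u j + b i₀ := hu i₀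
    _ ≤ ∑ j, A i₀ j * u i₀ + b i₀ := by gcongr with j; exacts [hA i₀ j, hi₀ j]
    _ = (∑ j, A i₀ j) * u i₀ + b i₀ := by rw [sum_mul]
  have hpos : 0 < 1 - ∑ j, A i₀ j := sub_pos.mpr (hA_row i₀)
  refine (hi₀ i).trans (le_of_mul_le_mul_left ?_ hpos)
  linarith [hb i₀]

lemma Matrix.sum_abs_le_mulVec_add {m n : Type*} [Fintype m] [Fintype n]
    {A : Matrix m m ℝ} {B M : Matrix m n ℝ} (hA : ∀ i j, 0 ≤ A i j) (hM : M = A * M + B)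
    (i : m) :
    ∑ k, |M i k| ≤ (A *ᵥ fun j => ∑ k, |M j k|) i + ∑ k, |B i k| := calc
  ∑ k, |M i k| = ∑ k, |∑ j, A i j * M j k + B i k| := by
      conv_lhs => rw [hM]
      rfl
  _ ≤ ∑ k, (∑ j, A i j * |M j k| + |B i k|) := by
      gcongr with k
      refine (abs_add_le _ _).trans (add_le_add_left ?_ _)
      refine (abs_sum_le_sum_abs _ _).trans_eq (sum_congr rfl fun j _ => ?_)
      rw [abs_mul, abs_of_nonneg (hA i j)]
  _ = (A *ᵥ fun j => ∑ k, |M j k|) i + ∑ k, |B i k| := by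
      simp only [sum_add_distrib, mulVec, dotProduct, mul_sum]
      rw [sum_comm]

lemma Matrix.sum_row_lt_one_of_le_one_div_sqrt {p : ℕ} {A : Matrix (Fin p) (Fin p) ℝ}
    (hunit : IsUnit (1 - A)) (i : Fin p) (h : ∑ j, A i j ≤ 1 / √p) : ∑ j, A i j < 1 := by
  rcases p with _ | _ | p
  · exact i.elim0
  · obtain rfl : i = 0 := Fin.fin_one_eq_zero i
    rw [Fin.sum_univ_one] at *
    refine h.trans_eq (by simp) |>.lt_of_ne fun hone => ?_
    rw [isUnit_iff_isUnit_det, det_fin_one, sub_apply, hone] at hunit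
    simp at hunit
  · refine h.trans_lt ?_
    rw [div_lt_one (by positivity), Real.lt_sqrt zero_le_one]
    norm_cast
    omega

/-- If `A` is an entrywise nonnegative `p × p` real matrix with spectral
radius `< 1`, `B` is an entrywise nonnegative `p × q` real matrix, and every combined row
sum `Σ_j A i j + Σ_k B i k` is at most `1 / √p`, then `‖(I - A)⁻¹ B‖₂ ≤ 1`. -/
theorem stmt3 (p q : ℕ) (A : Matrix (Fin p) (Fin p) ℝ) (B : Matrix (Fin p) (Fin q) ℝ)
    (hA : ∀ i j, 0 ≤ A i j) (hB : ∀ i j, 0 ≤ B i j)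
    (hsr : ∀ μ ∈ spectrum ℂ (A.map (Complex.ofReal)), ‖μ‖ < 1)
    (hrow : ∀ i, (∑ j, A i j) + (∑ k, B i k) ≤ 1 / Real.sqrt p) :
    opNorm2 ((1 - A)⁻¹ * B) ≤ 1 := by
  have hunit : IsUnit (1 - A) :=
    isUnit_one_sub_of_one_notMem_spectrum_map_ofReal fun h1 => by simpa using hsr 1 h1
  set M := (1 - A)⁻¹ * B
  have hM : M = A * M + B := by
    have : (1 - A) * M = B :=
      mul_nonsing_inv_cancel_left _ _ ((isUnit_iff_isUnit_det _).mp hunit)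
    rw [Matrix.sub_mul, Matrix.one_mul] at this
    rw [← this, add_sub_cancel]
  have hA_row : ∀ i, ∑ j, A i j ≤ 1 / √p := fun i =>
    (le_add_of_nonneg_right (sum_nonneg fun k _ => hB i k)).trans (hrow i)
  have hb : ∀ i, ∑ k, |B i k| ≤ 1 / √p * (1 - ∑ j, A i j) := fun i => by
    have hc : 1 / √p ≤ 1 := by
      rw [div_le_one (Real.sqrt_pos.mpr (by exact_mod_cast i.pos)), Real.one_le_sqrt]
      exact_mod_cast i.pos
    have hr : 0 ≤ ∑ j, A i j := sum_nonneg fun j _ => hA i j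
    simp only [abs_of_nonneg (hB i _)]
    nlinarith [hrow i]
  have hMrow : ∀ i, ∑ k, |M i k| ≤ 1 / √p :=
    le_of_le_mulVec_add hA (fun i => sum_row_lt_one_of_le_one_div_sqrt hunit i (hA_row i)) hb
      (sum_abs_le_mulVec_add hA hM)
  calc opNorm2 M ≤ √p * (1 / √p) := by
        simpa using opNorm2_le_sqrt_card_mul M (by positivity) (by simpa using hMrow)
    _ ≤ 1 := by rw [mul_one_div]; exact div_self_le_one _
end

section
/- Let a, b, c ≥ 0 be real numbers with a + b + c < 1, and let G be the n×n tridiagonal Toeplitz matrix with G_{ii} = a for all i, G_{i,i+1} = b, G_{i+1,i} = c, and all other entries zero. Then I − G is invertible, all entries of (I − G)⁻¹ are nonnegative, and for every fixed column index q (1 ≤ q ≤ n) the entries of (I − G)⁻¹ in column q are nonincreasing going down from row q: ((I − G)⁻¹)_{l,q} ≥ ((I − G)⁻¹)_{l+1,q} for all l with q ≤ l < n. -/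
/-!
Minimum principle: if `G ≥ 0` has row sums `< 1`, then `(1 - G) *ᵥ x ≥ 0` forces `x ≥ 0`
(at a negative minimum `x i`, row `i` of `(1 - G) *ᵥ x` is at most `(1 - ∑ⱼ G i j) * x i < 0`).
Applied to `± x` this gives injectivity of `1 - G`, and applied to the columns of `(1 - G)⁻¹`
their nonnegativity.

Below row `q`, column `q` of `(1 - G)⁻¹` solves `x k = c x (k-1) + a x k + b x (k+1)`, with
`x n = 0`. Descending from the bottom row, `x (k+2) ≤ x (k+1)` turns the recurrence at `k+1`
into `(1 - a - b) x (k+1) ≤ c x k`, and since `c < 1 - a - b` and `x ≥ 0` this gives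
`x (k+1) ≤ x k`.
-/

open Matrix

namespace Matrix

variable {ι : Type*} [Fintype ι] [DecidableEq ι] {G : Matrix ι ι ℝ}

theorem nonneg_of_one_sub_mulVec_nonneg (hG : ∀ i j, 0 ≤ G i j) (hrow : ∀ i, ∑ j, G i j < 1)
    {x : ι → ℝ} (hx : 0 ≤ (1 - G) *ᵥ x) : 0 ≤ x := by
  by_contra hneg
  obtain ⟨i₀, hi₀⟩ : ∃ i, x i < 0 := by simpa [Pi.le_def] using hneg
  have : Nonempty ι := ⟨i₀⟩
  obtain ⟨i, hmin⟩ := Finite.exists_min x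
  have hxi : x i < 0 := (hmin i₀).trans_lt hi₀
  have hGx : (∑ j, G i j) * x i ≤ (G *ᵥ x) i := by
    rw [Finset.sum_mul, mulVec, dotProduct]
    exact Finset.sum_le_sum fun j _ => mul_le_mul_of_nonneg_left (hmin j) (hG i j)
  have := hx i
  rw [sub_mulVec, one_mulVec, Pi.zero_apply, Pi.sub_apply] at this
  nlinarith [hrow i]

theorem isUnit_one_sub (hG : ∀ i j, 0 ≤ G i j) (hrow : ∀ i, ∑ j, G i j < 1) :
    IsUnit (1 - G) := by
  refine mulVec_injective_iff_isUnit.mp fun x y hxy => le_antisymm ?_ ?_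
  · refine sub_nonneg.mp (nonneg_of_one_sub_mulVec_nonneg hG hrow ?_)
    rw [mulVec_sub, hxy, sub_self]
  · refine sub_nonneg.mp (nonneg_of_one_sub_mulVec_nonneg hG hrow ?_)
    rw [mulVec_sub, hxy, sub_self]

theorem one_sub_mulVec_inv_col (hG : ∀ i j, 0 ≤ G i j) (hrow : ∀ i, ∑ j, G i j < 1) (q : ι) :
    (1 - G) *ᵥ (1 - G)⁻¹.col q = Pi.single q 1 := by
  rw [← mulVec_single_one, mulVec_mulVec,
    mul_nonsing_inv _ ((isUnit_iff_isUnit_det _).mp (isUnit_one_sub hG hrow)), one_mulVec]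

theorem inv_one_sub_nonneg (hG : ∀ i j, 0 ≤ G i j) (hrow : ∀ i, ∑ j, G i j < 1) (i j : ι) :
    0 ≤ (1 - G)⁻¹ i j := by
  have := nonneg_of_one_sub_mulVec_nonneg hG hrow
    ((one_sub_mulVec_inv_col hG hrow j).symm ▸ Pi.single_nonneg.mpr zero_le_one)
  exact this i

end Matrix

section Tridiagonal

variable {n : ℕ}

def IsTridiagonalToeplitz (a b c : ℝ) (G : Matrix (Fin n) (Fin n) ℝ) : Prop :=
  ∀ i j : Fin n,
    G i j = if (i : ℕ) = (j : ℕ) then a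
      else if (j : ℕ) = (i : ℕ) + 1 then b
      else if (i : ℕ) = (j : ℕ) + 1 then c
      else 0

-- Lets the boundary rows of a tridiagonal system be written like the interior ones.
def Fin.zeroExtend (x : Fin n → ℝ) (k : ℕ) : ℝ :=
  if h : k < n then x ⟨k, h⟩ else 0

theorem Fin.sum_ite_val_eq (x : Fin n → ℝ) (k : ℕ) :
    ∑ j : Fin n, (if (j : ℕ) = k then x j else 0) = Fin.zeroExtend x k := by
  unfold Fin.zeroExtend
  split_ifs with hk
  · have hval : ∀ j : Fin n, (j : ℕ) = k ↔ j = ⟨k, hk⟩ := fun j =>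
      (Fin.ext_iff (a := j) (b := ⟨k, hk⟩)).symm
    simp_rw [hval, Finset.sum_ite_eq', Finset.mem_univ, if_true]
  · exact Finset.sum_eq_zero fun j _ => if_neg (by omega)

theorem Finset.sum_ite_le_of_subsingleton {ι : Type*} [Fintype ι] (p : ι → Prop)
    [DecidablePred p] (hp : ∀ j j', p j → p j' → j = j') {x : ℝ} (hx : 0 ≤ x) :
    ∑ j, (if p j then x else 0) ≤ x := by
  rw [Finset.sum_ite, Finset.sum_const_zero, add_zero, Finset.sum_const, nsmul_eq_mul]
  have : (Finset.univ.filter p).card ≤ 1 :=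
    Finset.card_le_one.mpr fun j hj j' hj' => hp j j' (by simpa using hj) (by simpa using hj')
  exact mul_le_of_le_one_left hx (by exact_mod_cast this)

theorem le_of_recurrence_of_le {a b c x₀ x₁ x₂ : ℝ} (hb : 0 ≤ b) (hc : 0 ≤ c)
    (habc : a + b + c < 1) (hx₀ : 0 ≤ x₀)
    (hrec : x₁ = c * x₀ + a * x₁ + b * x₂) (hx₂ : x₂ ≤ x₁) : x₁ ≤ x₀ := by
  nlinarith [mul_le_mul_of_nonneg_left hx₂ hb]

namespace IsTridiagonalToeplitz

variable {a b c : ℝ} {G : Matrix (Fin n) (Fin n) ℝ}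

theorem apply_eq_add (hG : IsTridiagonalToeplitz a b c G) (i j : Fin n) :
    G i j = (if (j : ℕ) = i then a else 0) + (if (j : ℕ) = i + 1 then b else 0)
      + (if (j : ℕ) + 1 = i then c else 0) := by
  rw [hG]
  split_ifs <;> first | ring1 | (exfalso; omega)

theorem nonneg (hG : IsTridiagonalToeplitz a b c G) (ha : 0 ≤ a) (hb : 0 ≤ b) (hc : 0 ≤ c)
    (i j : Fin n) : 0 ≤ G i j := by
  rw [hG.apply_eq_add]
  positivity

theorem sum_row_le (hG : IsTridiagonalToeplitz a b c G) (ha : 0 ≤ a) (hb : 0 ≤ b) (hc : 0 ≤ c)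
    (i : Fin n) : ∑ j, G i j ≤ a + b + c := by
  simp only [hG.apply_eq_add, Finset.sum_add_distrib]
  gcongr <;> apply Finset.sum_ite_le_of_subsingleton <;>
    first | assumption | (intro j j' h h'; omega)

theorem mulVec_succ (hG : IsTridiagonalToeplitz a b c G) (x : Fin n → ℝ) (k : ℕ)
    (hk : k + 1 < n) :
    (G *ᵥ x) ⟨k + 1, hk⟩ = c * Fin.zeroExtend x k + a * Fin.zeroExtend x (k + 1)
      + b * Fin.zeroExtend x (k + 2) := by
  simp only [mulVec, dotProduct, hG.apply_eq_add, add_mul, ite_zero_mul, ← mul_ite_zero,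
    ← Finset.mul_sum, Finset.sum_add_distrib, Nat.add_right_cancel_iff, Fin.sum_ite_val_eq]
  ring

theorem sum_row_lt_one (hG : IsTridiagonalToeplitz a b c G) (ha : 0 ≤ a) (hb : 0 ≤ b)
    (hc : 0 ≤ c) (habc : a + b + c < 1) (i : Fin n) : ∑ j, G i j < 1 :=
  (hG.sum_row_le ha hb hc i).trans_lt habc

theorem zeroExtend_inv_one_sub_col_succ_le (hG : IsTridiagonalToeplitz a b c G) (ha : 0 ≤ a)
    (hb : 0 ≤ b) (hc : 0 ≤ c) (habc : a + b + c < 1) (q : Fin n) {k : ℕ} (hqk : q ≤ k) :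
    Fin.zeroExtend ((1 - G)⁻¹.col q) (k + 1) ≤ Fin.zeroExtend ((1 - G)⁻¹.col q) k := by
  have hG0 := hG.nonneg ha hb hc
  have hrow := hG.sum_row_lt_one ha hb hc habc
  set y := Fin.zeroExtend ((1 - G)⁻¹.col q)
  have hy : ∀ k, 0 ≤ y k := fun k => by
    unfold y Fin.zeroExtend
    split_ifs
    exacts [inv_one_sub_nonneg hG0 hrow _ _, le_rfl]
  have hyn : ∀ k, n ≤ k → y k = 0 := fun k hk => dif_neg (by omega)
  have hrec : ∀ k : ℕ, q ≤ k → k + 1 < n →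
      y (k + 1) = c * y k + a * y (k + 1) + b * y (k + 2) := by
    intro k hqk hk
    have hcol := congrFun (one_sub_mulVec_inv_col hG0 hrow q) ⟨k + 1, hk⟩
    rw [sub_mulVec, one_mulVec, Pi.sub_apply, hG.mulVec_succ,
      Pi.single_eq_of_ne (by simp only [ne_eq, Fin.ext_iff]; omega)] at hcol
    have hyk : y (k + 1) = (1 - G)⁻¹.col q ⟨k + 1, hk⟩ := dif_pos hk
    linarith
  suffices ∀ d (k : ℕ), q ≤ k → n ≤ k + 1 + d → y (k + 1) ≤ y k from this n k hqk (by omega)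
  intro d
  induction d with
  | zero => intro k _ hk; simpa [hyn (k + 1) hk] using hy k
  | succ d ih =>
    intro k hqk hkd
    by_cases hk : k + 1 < n
    · exact le_of_recurrence_of_le hb hc habc (hy k) (hrec k hqk hk)
        (ih (k + 1) (by omega) (by omega))
    · simpa [hyn (k + 1) (by omega)] using hy k

end IsTridiagonalToeplitz

end Tridiagonal

/-- Let `a, b, c ≥ 0` with `a + b + c < 1`, and let `G` be the `n × n`
tridiagonal Toeplitz matrix with `a` on the diagonal, `b` on the superdiagonal and `c` on
the subdiagonal. Then `I - G` is invertible, `(I - G)⁻¹` is entrywise nonnegative, and for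
each fixed column `q` the entries of column `q` of `(I - G)⁻¹` are nonincreasing going down
from row `q`. -/
theorem stmt4 (n : ℕ) (a b c : ℝ) (ha : 0 ≤ a) (hb : 0 ≤ b) (hc : 0 ≤ c)
    (habc : a + b + c < 1) (G : Matrix (Fin n) (Fin n) ℝ)
    (hG : ∀ i j : Fin n,
      G i j = if (i : ℕ) = (j : ℕ) then a
        else if (j : ℕ) = (i : ℕ) + 1 then b
        else if (i : ℕ) = (j : ℕ) + 1 then c
        else 0) :
    IsUnit (1 - G) ∧
    (∀ i j : Fin n, 0 ≤ (1 - G)⁻¹ i j) ∧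
    (∀ (q l : Fin n) (hl : (l : ℕ) + 1 < n), q ≤ l →
      (1 - G)⁻¹ ⟨(l : ℕ) + 1, hl⟩ q ≤ (1 - G)⁻¹ l q) := by
  have hG' : IsTridiagonalToeplitz a b c G := hG
  have hG0 := hG'.nonneg ha hb hc
  have hrow := hG'.sum_row_lt_one ha hb hc habc
  refine ⟨isUnit_one_sub hG0 hrow, inv_one_sub_nonneg hG0 hrow, fun q l hl hql => ?_⟩
  simpa [Fin.zeroExtend, hl] using hG'.zeroExtend_inv_one_sub_col_succ_le ha hb hc habc q hql
end

section
/- Let a, b, c ≥ 0 be real numbers with a + c > 1, and let G be the n×n tridiagonal Toeplitz matrix with G_{ii} = a, G_{i,i+1} = b, G_{i+1,i} = c, and all other entries zero. Assume the spectral radius of G is strictly less than 1. Then for every column index q and every row index l with q < l ≤ n, the entries of (I − G)⁻¹ satisfy ((I − G)⁻¹)_{l,q} ≥ ((I − G)⁻¹)_{q,q}. -/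
/-!
Since `G ≥ 0` and every complex eigenvalue of `G` lies in the open unit disc, Gelfand's formula
makes the Neumann series `∑ Gᵏ` converge; it is `(I - G)⁻¹`, which is therefore entrywise
nonnegative. Its `q`-th column `x ≥ 0` solves `x = G x + e_q`. Row `q` gives `(1 - a) x_q ≥ 1`,
so `a < 1`. In a row `l > q`, keeping only the terms `c x_{l-1} + a x_l` of `(G x)_l` gives
`(1 - a) x_l ≥ c x_{l-1} ≥ (1 - a) x_{l-1}`, because `c > 1 - a > 0`. Hence `x` is nondecreasing
from `q` on.
-/

open Matrix
open scoped NNReal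

theorem summable_norm_pow_of_spectrum_norm_lt_one {A : Type*} [NormedRing A]
    [NormedAlgebra ℂ A] [CompleteSpace A] {a : A} (h : ∀ z ∈ spectrum ℂ a, ‖z‖ < 1) :
    Summable fun n => ‖a ^ n‖ := by
  nontriviality A
  have hρ : spectralRadius ℂ a < (1 : ℝ≥0) :=
    spectrum.spectralRadius_lt_of_forall_lt a fun z hz => by exact_mod_cast h z hz
  obtain ⟨r, hρr, hr1⟩ := ENNReal.lt_iff_exists_nnreal_btwn.mp hρ
  have hroot :=
    (spectrum.pow_nnnorm_pow_one_div_tendsto_nhds_spectralRadius a).eventually_lt_const hρr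
  refine .of_norm_bounded_eventually_nat
    (summable_geometric_of_lt_one r.2 (by exact_mod_cast hr1)) ?_
  filter_upwards [hroot, Filter.eventually_gt_atTop 0] with n hn hn0
  rw [one_div, ENNReal.rpow_inv_lt_iff (by positivity), ENNReal.rpow_natCast] at hn
  rw [norm_norm]
  exact_mod_cast hn.le

namespace Matrix

section NeumannSeries

variable {ι : Type*} [Fintype ι] [DecidableEq ι] {G : Matrix ι ι ℝ}

theorem summable_pow_of_spectrum_norm_lt_one
    (h : ∀ μ ∈ spectrum ℂ (G.map Complex.ofReal), ‖μ‖ < 1) : Summable (G ^ ·) := by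
  let _ := Matrix.linftyOpNormedRing (n := ι) (α := ℂ)
  let _ := Matrix.linftyOpNormedAlgebra (n := ι) (R := ℂ) (α := ℂ)
  have hB : Summable ((G.map Complex.ofReal) ^ ·) :=
    (summable_norm_pow_of_spectrum_norm_lt_one h).of_norm
  convert hB.map Complex.reAddGroupHom.mapMatrix
    (continuous_id.matrix_map Complex.continuous_re) using 1
  ext n : 1
  change G ^ n = ((G.map Complex.ofRealHom) ^ n).map Complex.re
  rw [← Matrix.map_pow, Matrix.map_map]
  ext
  simp

theorem inv_one_sub_eq_tsum_pow_s5 (h : ∀ μ ∈ spectrum ℂ (G.map Complex.ofReal), ‖μ‖ < 1) :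
    (1 - G)⁻¹ = ∑' n, G ^ n :=
  inv_eq_right_inv (summable_pow_of_spectrum_norm_lt_one h).one_sub_mul_tsum_pow

theorem inv_one_sub_apply_nonneg (hG : ∀ i j, 0 ≤ G i j)
    (h : ∀ μ ∈ spectrum ℂ (G.map Complex.ofReal), ‖μ‖ < 1) (i j : ι) :
    0 ≤ (1 - G)⁻¹ i j := by
  rw [inv_one_sub_eq_tsum_pow_s5 h]
  have hs := summable_pow_of_spectrum_norm_lt_one h
  exact (Pi.hasSum.mp (Pi.hasSum.mp hs.hasSum i) j).nonneg fun n => pow_apply_nonneg hG n i j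

end NeumannSeries

section NonnegMulVec

variable {ι : Type*} [Fintype ι] {G : Matrix ι ι ℝ} {x : ι → ℝ}

theorem mul_le_mulVec_apply (hG : ∀ i j, 0 ≤ G i j) (hx : 0 ≤ x) (i j : ι) :
    G i j * x j ≤ (G *ᵥ x) i :=
  Finset.single_le_sum (f := fun k => G i k * x k) (fun k _ => mul_nonneg (hG i k) (hx k))
    (Finset.mem_univ j)

theorem add_mul_le_mulVec_apply (hG : ∀ i j, 0 ≤ G i j) (hx : 0 ≤ x) {j k : ι} (hjk : j ≠ k)
    (i : ι) : G i j * x j + G i k * x k ≤ (G *ᵥ x) i :=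
  Finset.add_le_sum (f := fun l => G i l * x l) (fun l _ => mul_nonneg (hG i l) (hx l))
    (Finset.mem_univ j) (Finset.mem_univ k) hjk

end NonnegMulVec

open Order in
theorem monotoneOn_Ici_of_one_sub_mulVec_eq_single {ι : Type*} [Fintype ι] [LinearOrder ι]
    [SuccOrder ι] [IsSuccArchimedean ι] {G : Matrix ι ι ℝ} {x : ι → ℝ} {q : ι} {a c : ℝ}
    (hG : ∀ i j, 0 ≤ G i j) (hdiag : ∀ i, G i i = a) (hsub : ∀ i j, j ⋖ i → G i j = c)
    (hac : 1 < a + c) (hx : 0 ≤ x) (hsol : (1 - G) *ᵥ x = Pi.single q 1) :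
    MonotoneOn x (Set.Ici q) := by
  have hrow : ∀ i, x i = (G *ᵥ x) i + (Pi.single q 1 : ι → ℝ) i := fun i => by
    have := congrFun hsol i
    rw [sub_mulVec, one_mulVec, Pi.sub_apply] at this
    linarith
  have ha : a < 1 := by
    have hq := hrow q
    have := mul_le_mulVec_apply hG hx q q
    rw [hdiag] at this
    rw [Pi.single_eq_same] at hq
    by_contra! h
    nlinarith [mul_nonneg (sub_nonneg.2 h) (hx q)]
  refine monotoneOn_of_le_succ Set.ordConnected_Ici fun j hj hqj _ => ?_
  set i := succ j
  have hji : j ⋖ i := covBy_succ_of_not_isMax hj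
  have hi := hrow i
  rw [Pi.single_eq_of_ne (hqj.trans_lt hji.lt).ne', add_zero] at hi
  have := add_mul_le_mulVec_apply hG hx hji.lt.ne i
  rw [hsub i j hji, hdiag] at this
  have hstep : (1 - a) * x j ≤ (1 - a) * x i := calc
    (1 - a) * x j ≤ c * x j := mul_le_mul_of_nonneg_right (by linarith) (hx j)
    _ ≤ (1 - a) * x i := by linarith
  exact le_of_mul_le_mul_left hstep (by linarith)

end Matrix

/-- Let `a, b, c ≥ 0` with `a + c > 1`, let `G` be the `n × n` tridiagonal
Toeplitz matrix with `a` on the diagonal, `b` on the superdiagonal and `c` on the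
subdiagonal, and assume the spectral radius of `G` is `< 1` (every complex eigenvalue has
modulus `< 1`). Then for every column `q` and every row `l > q`,
`((I - G)⁻¹)_{l,q} ≥ ((I - G)⁻¹)_{q,q}`. -/
theorem stmt5 (n : ℕ) (a b c : ℝ) (ha : 0 ≤ a) (hb : 0 ≤ b) (hc : 0 ≤ c)
    (hac : 1 < a + c) (G : Matrix (Fin n) (Fin n) ℝ)
    (hG : ∀ i j : Fin n,
      G i j = if (i : ℕ) = (j : ℕ) then a
        else if (j : ℕ) = (i : ℕ) + 1 then b
        else if (i : ℕ) = (j : ℕ) + 1 then c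
        else 0)
    (hsr : ∀ μ ∈ spectrum ℂ (G.map (Complex.ofReal)), ‖μ‖ < 1) :
    ∀ q l : Fin n, q < l → (1 - G)⁻¹ q q ≤ (1 - G)⁻¹ l q := by
  intro q l hql
  have hGnn : ∀ i j, 0 ≤ G i j := fun i j => by
    rw [hG]
    split_ifs <;> first | assumption | rfl
  have hdiag : ∀ i, G i i = a := fun i => by simp [hG]
  have hsub : ∀ i j : Fin n, j ⋖ i → G i j = c := fun i j hji => by
    rw [Fin.covBy_iff, Nat.covBy_iff_add_one_eq] at hji
    rw [hG, if_neg (by omega), if_neg (by omega), if_pos hji.symm]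
  have hsol : (1 - G) *ᵥ ((1 - G)⁻¹).col q = Pi.single q 1 := by
    rw [← mulVec_single_one, mulVec_mulVec, inv_one_sub_eq_tsum_pow_s5 hsr,
      (summable_pow_of_spectrum_norm_lt_one hsr).one_sub_mul_tsum_pow, one_mulVec]
  have hx : 0 ≤ ((1 - G)⁻¹).col q := fun i => inv_one_sub_apply_nonneg hGnn hsr i q
  exact monotoneOn_Ici_of_one_sub_mulVec_eq_single hGnn hdiag hsub hac hx hsol
    Set.self_mem_Ici hql.le hql.le
end

section
/- Let γ denote the standard Gaussian measure on ℝ (mean 0, variance 1), and for t ≥ 0 define Q(t) = γ({x ∈ ℝ : x² ≥ t}), the tail probability of a chi-squared random variable with one degree of freedom. Define τ(R) = (log R)/(R − 1) for R > 1. Then the function P(R) = ½·(1 − Q(τ(R))) + ½·Q(R·τ(R)) is strictly decreasing on (1, ∞). -/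
/-!
`τ(R) = log R / (R - 1)` is the slope of the strictly concave function `log` between `1` and `R`,
hence strictly decreasing, and `R τ(R) = τ(1/R)` is therefore strictly increasing on `(1, ∞)`.
The tail `Q` is strictly decreasing because the Gaussian charges every open interval, so both
`-Q(τ(R))` and `Q(R τ(R))` strictly decrease.
-/

open ProbabilityTheory MeasureTheory Set Real

lemma strictAntiOn_measureReal_setOf_le_sq {μ : Measure ℝ} [IsFiniteMeasure μ] [μ.IsOpenPosMeasure] :
    StrictAntiOn (fun t : ℝ => μ.real {x : ℝ | t ≤ x ^ 2}) (Ici 0) := by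
  intro s (hs : 0 ≤ s) t _ hst
  have hsub : {x : ℝ | t ≤ x ^ 2} ⊆ {x : ℝ | s ≤ x ^ 2} := fun x hx => hst.le.trans hx
  have hgap : Ioo √s √t ⊆ {x : ℝ | s ≤ x ^ 2} \ {x : ℝ | t ≤ x ^ 2} := by
    rintro x ⟨hsx, hxt⟩
    have hx : 0 ≤ x := (sqrt_nonneg s).trans hsx.le
    exact ⟨(sqrt_le_left hx).1 hsx.le, fun h => hxt.not_ge ((sqrt_le_left hx).2 h)⟩
  have hpos : 0 < μ.real (Ioo √s √t) :=
    ENNReal.toReal_pos (isOpen_Ioo.measure_pos μ (nonempty_Ioo.2 (sqrt_lt_sqrt hs hst))).ne'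
      (measure_ne_top _ _)
  have hgap_le := measureReal_mono (μ := μ) hgap
  rw [measureReal_sdiff hsub (measurableSet_le measurable_const (by fun_prop))] at hgap_le
  linarith

lemma strictAntiOn_log_div_sub_one : StrictAntiOn (fun x => log x / (x - 1)) (Ioi 0 \ {1}) := by
  rintro x ⟨hx, hx1⟩ y ⟨hy, hy1⟩ hxy
  simpa using
    strictConcaveOn_log_Ioi.secant_strict_mono (a := 1) (mem_Ioi.2 one_pos) hx hy hx1 hy1 hxy

lemma mul_log_div_sub_one {x : ℝ} (hx : x ≠ 0) :
    x * (log x / (x - 1)) = log x⁻¹ / (x⁻¹ - 1) := by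
  rw [log_inv]
  rcases eq_or_ne x 1 with rfl | hx1
  · simp
  · field_simp [sub_ne_zero.2 hx1]
    ring

lemma strictMonoOn_mul_log_div_sub_one :
    StrictMonoOn (fun x => x * (log x / (x - 1))) (Ioi 1) := by
  have hinv : StrictAntiOn (fun x : ℝ => x⁻¹) (Ioi 1) := fun x hx y hy hxy =>
    inv_strictAntiOn (mem_Ioi.2 (zero_lt_one.trans hx)) (mem_Ioi.2 (zero_lt_one.trans hy)) hxy
  have hmaps : MapsTo (fun x : ℝ => x⁻¹) (Ioi 1) (Ioi 0 \ {1}) := fun x (hx : 1 < x) =>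
    ⟨inv_pos.2 (zero_lt_one.trans hx), (inv_lt_one_of_one_lt₀ hx).ne⟩
  refine (strictAntiOn_log_div_sub_one.comp hinv hmaps).congr fun x (hx : 1 < x) => ?_
  exact (mul_log_div_sub_one (zero_lt_one.trans hx).ne').symm

/-- Let `γ` be the standard Gaussian measure on `ℝ`, let
`Q(t) = γ({x : x² ≥ t})` (the tail of a chi-squared law with one degree of freedom) and
`τ(R) = (log R)/(R - 1)` for `R > 1`. Then `P(R) = ½(1 - Q(τ(R))) + ½ Q(R τ(R))` is
strictly decreasing on `(1, ∞)`. -/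
theorem stmt11 :
    StrictAntiOn (fun R : ℝ =>
      (1 / 2 : ℝ) *
          (1 - ((gaussianReal 0 1) {x : ℝ | Real.log R / (R - 1) ≤ x ^ 2}).toReal) +
        (1 / 2 : ℝ) *
          ((gaussianReal 0 1) {x : ℝ | R * (Real.log R / (R - 1)) ≤ x ^ 2}).toReal)
      (Set.Ioi 1) := by
  have : (gaussianReal 0 1).IsOpenPosMeasure :=
    (gaussianReal_absolutelyContinuous' 0 one_ne_zero).isOpenPosMeasure
  have hQ := strictAntiOn_measureReal_setOf_le_sq (μ := gaussianReal 0 1)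
  have hτ : ∀ R : ℝ, 1 < R → 0 ≤ log R / (R - 1) := fun R hR =>
    div_nonneg (log_nonneg hR.le) (sub_nonneg.2 hR.le)
  intro a (ha : 1 < a) b (hb : 1 < b) hab
  have hτ_lt : log b / (b - 1) < log a / (a - 1) :=
    strictAntiOn_log_div_sub_one ⟨zero_lt_one.trans ha, ha.ne'⟩
      ⟨zero_lt_one.trans hb, hb.ne'⟩ hab
  have hRτ_lt : a * (log a / (a - 1)) < b * (log b / (b - 1)) :=
    strictMonoOn_mul_log_div_sub_one ha hb hab
  have h₁ := hQ (hτ b hb) (hτ a ha) hτ_lt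
  have h₂ := hQ (mul_nonneg (zero_le_one.trans ha.le) (hτ a ha))
    (mul_nonneg (zero_le_one.trans hb.le) (hτ b hb)) hRτ_lt
  simp only [Measure.real] at h₁ h₂ ⊢
  linarith
end

section
/- Let A and B be real symmetric positive semidefinite r×r matrices such that A − B is positive semidefinite, and let σ² > 0. Then for every μ ∈ ℝ^r, μᵀ (A + σ²I)⁻¹ A μ ≥ μᵀ (B + σ²I)⁻¹ B μ. -/
/-!
Since `(S + σ²I)⁻¹ S = I - σ² (S + σ²I)⁻¹`, the claim says `μᵀ (A + σ²I)⁻¹ μ ≤ μᵀ (B + σ²I)⁻¹ μ`,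
i.e. that inversion reverses the Loewner order on positive definite matrices. This follows from
the variational formula `xᵀ N⁻¹ x = max_y (2 yᵀx - yᵀ N y)`: the functional being maximised
decreases as `N` grows.
-/

open Matrix

section

variable {n : Type*} [DecidableEq n]

lemma Matrix.PosSemidef.add_smul_one_posDef {S : Matrix n n ℝ} (hS : S.PosSemidef) {c : ℝ}
    (hc : 0 < c) : (S + c • 1).PosDef :=
  PosDef.posSemidef_add hS (PosDef.one.smul hc)

variable [Fintype n]

lemma Matrix.inv_add_smul_one_mul_self {R : Type*} [CommRing R] {S : Matrix n n R} {c : R}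
    (h : IsUnit (S + c • 1).det) :
    (S + c • 1)⁻¹ * S = 1 - c • (S + c • 1)⁻¹ :=
  calc (S + c • 1)⁻¹ * S = (S + c • 1)⁻¹ * (S + c • 1 - c • 1) := by rw [add_sub_cancel_right]
    _ = 1 - c • (S + c • 1)⁻¹ := by
      rw [Matrix.mul_sub, nonsing_inv_mul _ h, Matrix.mul_smul, Matrix.mul_one]

lemma Matrix.PosDef.mulVec_inv_mulVec {N : Matrix n n ℝ} (hN : N.PosDef) (x : n → ℝ) :
    N *ᵥ (N⁻¹ *ᵥ x) = x := by
  rw [mulVec_mulVec, mul_nonsing_inv _ ((isUnit_iff_isUnit_det N).mp hN.isUnit), one_mulVec]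

/-- Expanding `0 ≤ (y - N⁻¹x)ᵀ N (y - N⁻¹x)`. -/
lemma Matrix.PosDef.two_mul_dotProduct_sub_le {N : Matrix n n ℝ} (hN : N.PosDef)
    (x y : n → ℝ) : 2 * (y ⬝ᵥ x) - y ⬝ᵥ N *ᵥ y ≤ x ⬝ᵥ N⁻¹ *ᵥ x := by
  set z := N⁻¹ *ᵥ x
  have hNz : N *ᵥ z = x := hN.mulVec_inv_mulVec x
  have hNt : Nᵀ = N := by simpa using hN.isHermitian.eq
  have hsymm : z ⬝ᵥ N *ᵥ y = y ⬝ᵥ x := by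
    rw [dotProduct_mulVec, ← mulVec_transpose, hNt, hNz, dotProduct_comm]
  have hsq : 0 ≤ (y - z) ⬝ᵥ N *ᵥ (y - z) := by
    simpa using hN.posSemidef.dotProduct_mulVec_nonneg (y - z)
  simp only [mulVec_sub, sub_dotProduct, dotProduct_sub, hNz, hsymm] at hsq
  rw [dotProduct_comm z x] at hsq
  linarith

lemma Matrix.PosDef.dotProduct_inv_mulVec_le {M N : Matrix n n ℝ} (hN : N.PosDef)
    (hMN : (M - N).PosSemidef) (x : n → ℝ) :
    x ⬝ᵥ M⁻¹ *ᵥ x ≤ x ⬝ᵥ N⁻¹ *ᵥ x := by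
  have hM : M.PosDef := by simpa using hN.add_posSemidef hMN
  set y := M⁻¹ *ᵥ x
  have hNM : y ⬝ᵥ N *ᵥ y ≤ y ⬝ᵥ M *ᵥ y := by
    have := hMN.dotProduct_mulVec_nonneg y
    rw [sub_mulVec, dotProduct_sub, star_trivial] at this
    linarith
  calc x ⬝ᵥ M⁻¹ *ᵥ x = 2 * (y ⬝ᵥ x) - y ⬝ᵥ M *ᵥ y := by
        rw [hM.mulVec_inv_mulVec, dotProduct_comm]; ring
    _ ≤ 2 * (y ⬝ᵥ x) - y ⬝ᵥ N *ᵥ y := by linarith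
    _ ≤ x ⬝ᵥ N⁻¹ *ᵥ x := hN.two_mul_dotProduct_sub_le x y

end

/-- Let `A, B` be real symmetric positive semidefinite `r × r` matrices
with `A - B` positive semidefinite, and let `σ² > 0`. Then for every `μ ∈ ℝ^r`,
`μᵀ (A + σ²I)⁻¹ A μ ≥ μᵀ (B + σ²I)⁻¹ B μ`. -/
theorem stmt13 (r : ℕ) (A B : Matrix (Fin r) (Fin r) ℝ)
    (hA : A.PosSemidef) (hB : B.PosSemidef) (hAB : (A - B).PosSemidef)
    (σ2 : ℝ) (hσ2 : 0 < σ2) :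
    ∀ μ : Fin r → ℝ,
      μ ⬝ᵥ ((B + σ2 • (1 : Matrix (Fin r) (Fin r) ℝ))⁻¹ * B).mulVec μ ≤
        μ ⬝ᵥ ((A + σ2 • (1 : Matrix (Fin r) (Fin r) ℝ))⁻¹ * A).mulVec μ := by
  intro μ
  have hA' := hA.add_smul_one_posDef hσ2
  have hB' := hB.add_smul_one_posDef hσ2
  have hinv := hB'.dotProduct_inv_mulVec_le
    (by rwa [add_sub_add_right_eq_sub] : (A + σ2 • 1 - (B + σ2 • 1)).PosSemidef) μ
  rw [inv_add_smul_one_mul_self ((isUnit_iff_isUnit_det _).mp hA'.isUnit),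
    inv_add_smul_one_mul_self ((isUnit_iff_isUnit_det _).mp hB'.isUnit)]
  simp only [sub_mulVec, one_mulVec, dotProduct_sub, smul_mulVec, dotProduct_smul, smul_eq_mul]
  linarith [mul_le_mul_of_nonneg_left hinv hσ2.le]
end

section
/- Let the index set of a real n×n matrix G be partitioned into disjoint sets S, C, P with the (P, S) block of G equal to zero, and assume I − G and I_P − G_{PP} are invertible. Let E be a real n×r matrix whose rows indexed by C and by P are all zero, set R = (I − G)⁻¹ E, and let R_C and R_P denote the submatrices of R consisting of the rows indexed by C and by P, respectively. Let T = (I_P − G_{PP})⁻¹ G_{PC} and let σ² > 0. Define, for μ ∈ ℝ^r, η_C²(μ) = μᵀ (R_Cᵀ R_C + σ²I)⁻¹ R_Cᵀ R_C μ and η_P²(μ) = μᵀ (R_Pᵀ R_P + σ²I)⁻¹ R_Pᵀ R_P μ. Then: (a) if the largest singular value of T is at most 1, then η_C²(μ) ≥ η_P²(μ) for all μ ∈ ℝ^r; (b) if the smallest singular value of T is strictly greater than 1 and R_C μ ≠ 0, then η_P²(μ) > η_C²(μ). -/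
/-!
Row `P` of `(I - G) R = E` reads `(I - G_PP) R_P = G_PC R_C`, since `G_PS = 0` and `E_P = 0`;
hence `R_P = T R_C`. With `A_R = Rᵀ R + σ² I` one has `η²(μ) = ‖μ‖² - σ² μᵀ A_R⁻¹ μ`, and
`μᵀ A⁻¹ μ = max_x (2 μᵀ x - xᵀ A x)` for positive definite `A`. Evaluating this maximum for one
gain matrix at the maximiser `x = A_{R'}⁻¹ μ` of the other compares the two SNRs through
`‖T R_C x‖² - ‖R_C x‖²`, whose sign is fixed by the singular values of `T`. In the strict case
`R_C x ≠ 0`, since otherwise `μ = A_{R_P} x = σ² x` and `R_C μ = 0`.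
-/

open Matrix

/-- The squared SNR `μᵀ (Rᵀ R + σ² I)⁻¹ Rᵀ R μ` of the MAP detector for the mean shift
model with (row-restricted) zero-frequency gain matrix `R` and noise variance `σ²`. -/
noncomputable def etaSq {m : Type*} [Fintype m] {r : ℕ}
    (R : Matrix m (Fin r) ℝ) (σ2 : ℝ) (μ : Fin r → ℝ) : ℝ :=
  μ ⬝ᵥ ((Rᵀ * R + σ2 • (1 : Matrix (Fin r) (Fin r) ℝ))⁻¹ * (Rᵀ * R)).mulVec μ

namespace Matrix

variable {m n : Type*} [Fintype m] [Fintype n] [DecidableEq n]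

lemma mulVec_nonsing_inv_mulVec {α : Type*} [CommRing α] {A : Matrix n n α} (hA : IsUnit A.det)
    (v : n → α) : A *ᵥ (A⁻¹ *ᵥ v) = v := by
  rw [mulVec_mulVec, mul_nonsing_inv _ hA, one_mulVec]

lemma nonsing_inv_mulVec_mulVec {α : Type*} [CommRing α] {A : Matrix n n α} (hA : IsUnit A.det)
    (v : n → α) : A⁻¹ *ᵥ (A *ᵥ v) = v := by
  rw [mulVec_mulVec, nonsing_inv_mul _ hA, one_mulVec]

lemma dotProduct_transpose_mul_self_add_smul_one_mulVec (R : Matrix m n ℝ) (σ2 : ℝ)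
    (v : n → ℝ) :
    v ⬝ᵥ (Rᵀ * R + σ2 • 1) *ᵥ v = R *ᵥ v ⬝ᵥ R *ᵥ v + σ2 * (v ⬝ᵥ v) := by
  rw [add_mulVec, dotProduct_add, ← mulVec_mulVec, dotProduct_mulVec, vecMul_transpose,
    smul_mulVec, one_mulVec, dotProduct_smul, smul_eq_mul]

lemma posDef_transpose_mul_self_add_smul_one (R : Matrix m n ℝ) {σ2 : ℝ} (hσ2 : 0 < σ2) :
    (Rᵀ * R + σ2 • 1 : Matrix n n ℝ).PosDef := by
  have hRR : (Rᵀ * R).PosSemidef := by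
    simpa only [conjTranspose_eq_transpose_of_trivial] using posSemidef_conjTranspose_mul_self R
  exact PosDef.posSemidef_add hRR (PosDef.one.smul hσ2)

lemma two_mul_dotProduct_sub_le_dotProduct_inv_mulVec {B : Matrix n n ℝ} (hB : B.PosDef)
    (μ x : n → ℝ) : 2 * (μ ⬝ᵥ x) - x ⬝ᵥ B *ᵥ x ≤ μ ⬝ᵥ B⁻¹ *ᵥ μ := by
  set y := B⁻¹ *ᵥ μ
  have hBy : B *ᵥ y = μ := mulVec_nonsing_inv_mulVec hB.det_pos.ne'.isUnit μ
  have hyx : y ⬝ᵥ B *ᵥ x = μ ⬝ᵥ x := by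
    have hBT : Bᵀ = B := by
      simpa only [conjTranspose_eq_transpose_of_trivial] using hB.isHermitian.eq
    rw [dotProduct_mulVec, ← hBT, vecMul_transpose, hBy]
  have hnonneg : 0 ≤ (x - y) ⬝ᵥ B *ᵥ (x - y) := by
    simpa using hB.posSemidef.dotProduct_mulVec_nonneg (x - y)
  have hexpand : (x - y) ⬝ᵥ B *ᵥ (x - y) = x ⬝ᵥ B *ᵥ x - 2 * (μ ⬝ᵥ x) + μ ⬝ᵥ y := by
    rw [mulVec_sub, dotProduct_sub, sub_dotProduct, sub_dotProduct, hyx, hBy,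
      dotProduct_comm x μ, dotProduct_comm y μ]
    ring
  linarith

end Matrix

section Snr

variable {m p : Type*} [Fintype m] [Fintype p] {r : ℕ} {σ2 : ℝ}

lemma etaSq_eq_sub (R : Matrix m (Fin r) ℝ) (hσ2 : 0 < σ2) (μ : Fin r → ℝ) :
    etaSq R σ2 μ = μ ⬝ᵥ μ - σ2 * (μ ⬝ᵥ (Rᵀ * R + σ2 • 1)⁻¹ *ᵥ μ) := by
  set A := Rᵀ * R + σ2 • (1 : Matrix (Fin r) (Fin r) ℝ)
  have hA := (posDef_transpose_mul_self_add_smul_one R hσ2).det_pos.ne'.isUnit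
  have hinv : A⁻¹ * (Rᵀ * R) = 1 - σ2 • A⁻¹ := by
    rw [show Rᵀ * R = A - σ2 • 1 from (add_sub_cancel_right _ _).symm, Matrix.mul_sub,
      nonsing_inv_mul _ hA, mul_smul_comm, Matrix.mul_one]
  rw [etaSq, hinv, sub_mulVec, one_mulVec, smul_mulVec, dotProduct_sub, dotProduct_smul,
    smul_eq_mul]

lemma etaSq_add_le_etaSq (hσ2 : 0 < σ2) (R : Matrix m (Fin r) ℝ) (R' : Matrix p (Fin r) ℝ)
    {μ x : Fin r → ℝ} (hx : (R'ᵀ * R' + σ2 • 1) *ᵥ x = μ) :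
    etaSq R σ2 μ + σ2 * (R' *ᵥ x ⬝ᵥ R' *ᵥ x - R *ᵥ x ⬝ᵥ R *ᵥ x) ≤ etaSq R' σ2 μ := by
  have hx' : (R'ᵀ * R' + σ2 • 1)⁻¹ *ᵥ μ = x := hx ▸ nonsing_inv_mulVec_mulVec
    (posDef_transpose_mul_self_add_smul_one R' hσ2).det_pos.ne'.isUnit x
  have hvar := two_mul_dotProduct_sub_le_dotProduct_inv_mulVec
    (posDef_transpose_mul_self_add_smul_one R hσ2) μ x
  have hμx : μ ⬝ᵥ x = R' *ᵥ x ⬝ᵥ R' *ᵥ x + σ2 * (x ⬝ᵥ x) := by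
    rw [← hx, dotProduct_comm, dotProduct_transpose_mul_self_add_smul_one_mulVec]
  rw [dotProduct_transpose_mul_self_add_smul_one_mulVec] at hvar
  rw [etaSq_eq_sub R hσ2, etaSq_eq_sub R' hσ2, hx']
  nlinarith

lemma etaSq_mul_le (hσ2 : 0 < σ2) (R : Matrix m (Fin r) ℝ) {T : Matrix p m ℝ}
    (hT : ∀ d, T *ᵥ d ⬝ᵥ T *ᵥ d ≤ d ⬝ᵥ d) (μ : Fin r → ℝ) :
    etaSq (T * R) σ2 μ ≤ etaSq R σ2 μ := by
  set x := (Rᵀ * R + σ2 • 1)⁻¹ *ᵥ μ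
  have hx : (Rᵀ * R + σ2 • 1) *ᵥ x = μ :=
    mulVec_nonsing_inv_mulVec (posDef_transpose_mul_self_add_smul_one R hσ2).det_pos.ne'.isUnit μ
  have hgain := etaSq_add_le_etaSq hσ2 (T * R) R hx
  have hcontract := hT (R *ᵥ x)
  rw [← mulVec_mulVec] at hgain
  nlinarith

lemma etaSq_lt_etaSq_mul (hσ2 : 0 < σ2) {R : Matrix m (Fin r) ℝ} {T : Matrix p m ℝ} {c : ℝ}
    (hc : 1 < c) (hT : ∀ d, c * (d ⬝ᵥ d) ≤ T *ᵥ d ⬝ᵥ T *ᵥ d) {μ : Fin r → ℝ}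
    (hμ : R *ᵥ μ ≠ 0) : etaSq R σ2 μ < etaSq (T * R) σ2 μ := by
  set x := ((T * R)ᵀ * (T * R) + σ2 • 1)⁻¹ *ᵥ μ
  have hx : ((T * R)ᵀ * (T * R) + σ2 • 1) *ᵥ x = μ := mulVec_nonsing_inv_mulVec
    (posDef_transpose_mul_self_add_smul_one (T * R) hσ2).det_pos.ne'.isUnit μ
  have hRx : R *ᵥ x ≠ 0 := by
    intro h0
    apply hμ
    rw [← hx, add_mulVec, ← mulVec_mulVec, ← mulVec_mulVec, h0, mulVec_zero, mulVec_zero,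
      zero_add, smul_mulVec, one_mulVec, mulVec_smul, h0, smul_zero]
  have hgain := etaSq_add_le_etaSq hσ2 R (T * R) hx
  have hexpand := hT (R *ᵥ x)
  have hpos : 0 < R *ᵥ x ⬝ᵥ R *ᵥ x := by simpa using dotProduct_star_self_pos_iff.mpr hRx
  rw [← mulVec_mulVec] at hgain
  nlinarith [mul_pos hσ2 (mul_pos (sub_pos.mpr hc) hpos)]

end Snr

namespace Matrix

variable {S C P n α : Type*} [Fintype S] [Fintype C] [Fintype P] [DecidableEq S]
  [DecidableEq C] [DecidableEq P] [CommRing α]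

lemma one_sub_submatrix_mul_submatrix_eq_of_one_sub_mul_eq
    {G : Matrix (S ⊕ C ⊕ P) (S ⊕ C ⊕ P) α}
    (hPS : ∀ p l, G (Sum.inr (Sum.inr p)) (Sum.inl l) = 0) {X E : Matrix (S ⊕ C ⊕ P) n α}
    (hEP : ∀ p j, E (Sum.inr (Sum.inr p)) j = 0) (hX : (1 - G) * X = E) :
    (1 - G.submatrix (Sum.inr ∘ Sum.inr) (Sum.inr ∘ Sum.inr)) * X.submatrix (Sum.inr ∘ Sum.inr) id
      = G.submatrix (Sum.inr ∘ Sum.inr) (Sum.inr ∘ Sum.inl)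
        * X.submatrix (Sum.inr ∘ Sum.inl) id := by
  ext p j
  have hrow := congrFun (congrFun hX (Sum.inr (Sum.inr p))) j
  simp only [mul_apply, sub_apply, one_apply, sub_mul, ite_mul, one_mul, zero_mul,
    Finset.sum_sub_distrib, Finset.sum_ite_eq, Finset.mem_univ, ↓reduceIte, Fintype.sum_sum_type,
    hPS, Finset.sum_const_zero, zero_add, hEP, submatrix_apply, Function.comp_apply, id_eq]
    at hrow ⊢
  linear_combination hrow

end Matrix

theorem stmt15_general {S C P : Type*} [Fintype S] [Fintype C] [Fintype P]
    [DecidableEq S] [DecidableEq C] [DecidableEq P] (r : ℕ)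
    (G : Matrix (S ⊕ C ⊕ P) (S ⊕ C ⊕ P) ℝ)
    (hPS : ∀ (p : P) (l : S), G (Sum.inr (Sum.inr p)) (Sum.inl l) = 0)
    (h1 : IsUnit (1 - G))
    (h2 : IsUnit ((1 : Matrix P P ℝ)
      - G.submatrix (Sum.inr ∘ Sum.inr) (Sum.inr ∘ Sum.inr)))
    (E : Matrix (S ⊕ C ⊕ P) (Fin r) ℝ)
    (hEP : ∀ (p : P) (j : Fin r), E (Sum.inr (Sum.inr p)) j = 0)
    (σ2 : ℝ) (hσ2 : 0 < σ2)
    (RC : Matrix C (Fin r) ℝ) (RP : Matrix P (Fin r) ℝ) (T : Matrix P C ℝ)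
    (hRC : RC = ((1 - G)⁻¹ * E).submatrix (Sum.inr ∘ Sum.inl) id)
    (hRP : RP = ((1 - G)⁻¹ * E).submatrix (Sum.inr ∘ Sum.inr) id)
    (hT : T = ((1 : Matrix P P ℝ)
        - G.submatrix (Sum.inr ∘ Sum.inr) (Sum.inr ∘ Sum.inr))⁻¹
      * G.submatrix (Sum.inr ∘ Sum.inr) (Sum.inr ∘ Sum.inl)) :
    ((∀ d : C → ℝ, (T.mulVec d) ⬝ᵥ (T.mulVec d) ≤ d ⬝ᵥ d) →
      ∀ μ : Fin r → ℝ, etaSq RP σ2 μ ≤ etaSq RC σ2 μ) ∧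
    ((∃ c : ℝ, 1 < c ∧ ∀ d : C → ℝ, c * (d ⬝ᵥ d) ≤ (T.mulVec d) ⬝ᵥ (T.mulVec d)) →
      ∀ μ : Fin r → ℝ, RC.mulVec μ ≠ 0 → etaSq RC σ2 μ < etaSq RP σ2 μ) := by
  have hRPT : RP = T * RC := by
    have hblock := one_sub_submatrix_mul_submatrix_eq_of_one_sub_mul_eq hPS hEP
      (mul_nonsing_inv_cancel_left _ E ((isUnit_iff_isUnit_det _).mp h1))
    rw [hRP, hRC, hT, Matrix.mul_assoc, ← hblock, ← Matrix.mul_assoc,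
      nonsing_inv_mul _ ((isUnit_iff_isUnit_det _).mp h2), Matrix.one_mul]
  rw [hRPT]
  exact ⟨fun hcontract μ => etaSq_mul_le hσ2 RC hcontract μ,
    fun ⟨_, hc, hexpand⟩ _ hμ => etaSq_lt_etaSq_mul hσ2 hc hexpand hμ⟩

/-- With indices partitioned into `S ⊕ C ⊕ P`, `G` real with zero
`(P, S)` block, `I - G` and `I_P - G_{PP}` invertible, `E` a real input matrix whose rows
on `C` and `P` vanish, `R = (I - G)⁻¹ E` with row restrictions `R_C`, `R_P`, cutset
transfer matrix `T = (I_P - G_{PP})⁻¹ G_{PC}`, and `σ² > 0`: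
(a) if the largest singular value of `T` is at most `1` (`‖T d‖₂² ≤ ‖d‖₂²` for all `d`)
then `η_C²(μ) ≥ η_P²(μ)` for all `μ`; (b) if the smallest singular value of `T` is
strictly greater than `1` (`‖T d‖₂² ≥ c ‖d‖₂²` for some `c > 1` and all `d`) and
`R_C μ ≠ 0`, then `η_P²(μ) > η_C²(μ)`. -/
theorem stmt15 {S C P : Type*} [Fintype S] [Fintype C] [Fintype P]
    [DecidableEq S] [DecidableEq C] [DecidableEq P] (r : ℕ)
    (G : Matrix (S ⊕ C ⊕ P) (S ⊕ C ⊕ P) ℝ)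
    (hPS : ∀ (p : P) (l : S), G (Sum.inr (Sum.inr p)) (Sum.inl l) = 0)
    (h1 : IsUnit (1 - G))
    (h2 : IsUnit ((1 : Matrix P P ℝ)
      - G.submatrix (Sum.inr ∘ Sum.inr) (Sum.inr ∘ Sum.inr)))
    (E : Matrix (S ⊕ C ⊕ P) (Fin r) ℝ)
    (hEC : ∀ (c : C) (j : Fin r), E (Sum.inr (Sum.inl c)) j = 0)
    (hEP : ∀ (p : P) (j : Fin r), E (Sum.inr (Sum.inr p)) j = 0)
    (σ2 : ℝ) (hσ2 : 0 < σ2)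
    (RC : Matrix C (Fin r) ℝ) (RP : Matrix P (Fin r) ℝ) (T : Matrix P C ℝ)
    (hRC : RC = ((1 - G)⁻¹ * E).submatrix (Sum.inr ∘ Sum.inl) id)
    (hRP : RP = ((1 - G)⁻¹ * E).submatrix (Sum.inr ∘ Sum.inr) id)
    (hT : T = ((1 : Matrix P P ℝ)
        - G.submatrix (Sum.inr ∘ Sum.inr) (Sum.inr ∘ Sum.inr))⁻¹
      * G.submatrix (Sum.inr ∘ Sum.inr) (Sum.inr ∘ Sum.inl)) :
    ((∀ d : C → ℝ, (T.mulVec d) ⬝ᵥ (T.mulVec d) ≤ d ⬝ᵥ d) →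
      ∀ μ : Fin r → ℝ, etaSq RP σ2 μ ≤ etaSq RC σ2 μ) ∧
    ((∃ c : ℝ, 1 < c ∧ ∀ d : C → ℝ, c * (d ⬝ᵥ d) ≤ (T.mulVec d) ⬝ᵥ (T.mulVec d)) →
      ∀ μ : Fin r → ℝ, RC.mulVec μ ≠ 0 → etaSq RC σ2 μ < etaSq RP σ2 μ) :=
  stmt15_general r G hPS h1 h2 E hEP σ2 hσ2 RC RP T hRC hRP hT
end

section
/- Let the index set of a real n×n matrix G be partitioned into disjoint sets S, C, P with the (P, S) block of G equal to zero, and assume that no eigenvalue of G and no eigenvalue of G_{PP} lies on the complex unit circle. Let E be a real n×r matrix whose rows indexed by C and by P are all zero. For z ∈ ℂ with |z| = 1 define (over ℂ) R(z) = (z·I − G)⁻¹ E, its row-restrictions R_C(z) and R_P(z) to the index sets C and P, and T(z) = (z·I_P − G_{PP})⁻¹ G_{PC}. Then: (a) if sup_{|z|=1} σ_max(T(z)) ≤ 1, then sup_{|z|=1} ‖R_P(z)‖₂ ≤ sup_{|z|=1} ‖R_C(z)‖₂; (b) if inf_{|z|=1} σ_min(T(z)) > 1, then sup_{|z|=1}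 ‖R_P(z)‖₂ ≥ sup_{|z|=1} ‖R_C(z)‖₂. -/
open Matrix

/-!
The `P`-block row of `(z I - G) R(z) = E` reads `(z I - G_PP) R_P(z) - G_PC R_C(z) = 0`, since
`G_PS = 0` and `E` vanishes on `P`; hence `R_P(z) = T(z) R_C(z)` on the unit circle. Part (a) is
then submultiplicativity of the operator norm, and in part (b) the lower bound `‖T(z) d‖ ≥ ‖d‖`
gives `‖R_C(z)‖₂ ≤ ‖R_P(z)‖₂` pointwise. Both suprema are finite because the resolvent is
continuous on the compact unit circle.
-/

section OpNorm2

variable {𝕜 : Type*} [RCLike 𝕜] {l m n : Type*} [Fintype l] [Fintype m] [Fintype n]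

lemma continuous_opNorm2 [DecidableEq n] : Continuous (opNorm2 : Matrix m n 𝕜 → ℝ) :=
  continuous_norm.comp ((Matrix.toEuclideanLin.trans
    (LinearMap.toContinuousLinearMap :
      (EuclideanSpace 𝕜 n →ₗ[𝕜] EuclideanSpace 𝕜 m) ≃ₗ[𝕜] _)).toLinearMap.continuous_of_finiteDimensional)

lemma opNorm2_mul_le [DecidableEq m] [DecidableEq n] (M : Matrix l m 𝕜) (N : Matrix m n 𝕜) :
    opNorm2 (M * N) ≤ opNorm2 M * opNorm2 N := by
  have hcomp : LinearMap.toContinuousLinearMap (Matrix.toEuclideanLin (M * N)) =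
      (LinearMap.toContinuousLinearMap (Matrix.toEuclideanLin M)).comp
        (LinearMap.toContinuousLinearMap (Matrix.toEuclideanLin N)) := by
    ext v
    simp [Matrix.toLpLin_apply, Matrix.mulVec_mulVec]
  rw [opNorm2, hcomp]
  exact ContinuousLinearMap.opNorm_comp_le _ _

lemma norm_le_norm_toEuclideanLin [DecidableEq m] {T : Matrix l m 𝕜}
    (hT : ∀ d : m → 𝕜, ∑ i, ‖d i‖ ^ 2 ≤ ∑ i, ‖(T *ᵥ d) i‖ ^ 2) (d : EuclideanSpace 𝕜 m) :
    ‖d‖ ≤ ‖Matrix.toEuclideanLin T d‖ := by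
  rw [EuclideanSpace.norm_eq, EuclideanSpace.norm_eq]
  exact Real.sqrt_le_sqrt (hT d)

lemma opNorm2_le_opNorm2_mul [DecidableEq m] [DecidableEq n] {T : Matrix l m 𝕜}
    (hT : ∀ d : m → 𝕜, ∑ i, ‖d i‖ ^ 2 ≤ ∑ i, ‖(T *ᵥ d) i‖ ^ 2) (M : Matrix m n 𝕜) :
    opNorm2 M ≤ opNorm2 (T * M) := by
  refine ContinuousLinearMap.opNorm_le_bound _ (norm_nonneg _) fun v => ?_
  calc ‖Matrix.toEuclideanLin M v‖
      ≤ ‖Matrix.toEuclideanLin (T * M) v‖ := by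
        simpa [Matrix.toLpLin_apply, Matrix.mulVec_mulVec] using
          norm_le_norm_toEuclideanLin hT (Matrix.toEuclideanLin M v)
    _ ≤ opNorm2 (T * M) * ‖v‖ :=
        (LinearMap.toContinuousLinearMap (Matrix.toEuclideanLin (T * M))).le_opNorm v

end OpNorm2

lemma isUnit_det_smul_one_sub_of_notMem_spectrum {K n : Type*} [CommRing K] [Fintype n]
    [DecidableEq n] {A : Matrix n n K} {z : K} (hz : z ∉ spectrum K A) :
    IsUnit (z • (1 : Matrix n n K) - A).det := by
  rw [spectrum.notMem_iff, Algebra.algebraMap_eq_smul_one] at hz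
  exact (Matrix.isUnit_iff_isUnit_det _).mp hz

lemma continuousOn_resolvent {𝕜 n : Type*} [NormedField 𝕜] [Fintype n] [DecidableEq n]
    (A : Matrix n n 𝕜) :
    ContinuousOn (fun z : 𝕜 => (z • (1 : Matrix n n 𝕜) - A)⁻¹) {z | z ∉ spectrum 𝕜 A} := by
  intro z hz
  refine ContinuousAt.continuousWithinAt (ContinuousAt.comp (g := Inv.inv) ?_ (by fun_prop))
  refine continuousAt_matrix_inv _ ?_
  rw [Ring.inverse_eq_inv']
  exact continuousAt_inv₀ (isUnit_det_smul_one_sub_of_notMem_spectrum hz).ne_zero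

lemma bddAbove_of_continuousOn_sphere {E : Type*} [NormedAddCommGroup E] [ProperSpace E]
    {f : E → ℝ} {r : ℝ} (hf : ContinuousOn f {z | ‖z‖ = r}) :
    BddAbove {x | ∃ z : E, ‖z‖ = r ∧ x = f z} := by
  have hcompact : IsCompact {z : E | ‖z‖ = r} := by
    simpa [Metric.sphere, dist_eq_norm] using isCompact_sphere (0 : E) r
  have himage : {x | ∃ z : E, ‖z‖ = r ∧ x = f z} = f '' {z | ‖z‖ = r} :=
    Set.ext fun x => ⟨fun ⟨z, hz, hx⟩ => ⟨z, hz, hx.symm⟩, fun ⟨z, hz, hx⟩ => ⟨z, hz, hx.symm⟩⟩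
  rw [himage]
  exact (hcompact.image_of_continuousOn hf).bddAbove

lemma bddAbove_opNorm2_resolvent_mul_submatrix {l m n : Type*} [Fintype l] [Fintype m]
    [Fintype n] [DecidableEq m] [DecidableEq n] (A : Matrix n n ℂ) (X : Matrix n m ℂ)
    (e : l → n) (hA : ∀ z : ℂ, ‖z‖ = 1 → z ∉ spectrum ℂ A) :
    BddAbove {x | ∃ z : ℂ, ‖z‖ = 1 ∧
      x = opNorm2 (((z • (1 : Matrix n n ℂ) - A)⁻¹ * X).submatrix e id)} := by
  refine bddAbove_of_continuousOn_sphere ?_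
  have hrows : Continuous fun M : Matrix n n ℂ => opNorm2 ((M * X).submatrix e id) :=
    continuous_opNorm2.comp (by fun_prop)
  exact hrows.comp_continuousOn ((continuousOn_resolvent A).mono fun z hz => hA z hz)

lemma csSup_le_csSup_of_forall_le {α β : Type*} [ConditionallyCompleteLattice β]
    {p : α → Prop} {f g : α → β} (hp : ∃ z, p z) (hg : BddAbove {x | ∃ z, p z ∧ x = g z})
    (hfg : ∀ z, p z → f z ≤ g z) :
    sSup {x | ∃ z, p z ∧ x = f z} ≤ sSup {x | ∃ z, p z ∧ x = g z} := by
  obtain ⟨z₀, hz₀⟩ := hp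
  refine csSup_le ⟨f z₀, z₀, hz₀, rfl⟩ ?_
  rintro x ⟨z, hz, rfl⟩
  exact (hfg z hz).trans (le_csSup hg ⟨z, hz, rfl⟩)

section BlockRows

variable {K : Type*} [CommRing K] {S C P m : Type*} [Fintype S] [Fintype C] [Fintype P]

lemma submatrix_mul_of_block_eq_zero (A : Matrix (S ⊕ C ⊕ P) (S ⊕ C ⊕ P) K)
    (X : Matrix (S ⊕ C ⊕ P) m K) (hPS : ∀ p s, A (Sum.inr (Sum.inr p)) (Sum.inl s) = 0) :
    (A * X).submatrix (Sum.inr ∘ Sum.inr) id =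
      A.submatrix (Sum.inr ∘ Sum.inr) (Sum.inr ∘ Sum.inl) * X.submatrix (Sum.inr ∘ Sum.inl) id +
      A.submatrix (Sum.inr ∘ Sum.inr) (Sum.inr ∘ Sum.inr) * X.submatrix (Sum.inr ∘ Sum.inr) id := by
  ext p j
  simp [Matrix.mul_apply, Fintype.sum_sum_type, hPS]

variable [DecidableEq S] [DecidableEq C] [DecidableEq P]

lemma resolvent_mul_submatrix_eq {G : Matrix (S ⊕ C ⊕ P) (S ⊕ C ⊕ P) K}
    {E : Matrix (S ⊕ C ⊕ P) m K}
    (hPS : ∀ p s, G (Sum.inr (Sum.inr p)) (Sum.inl s) = 0)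
    (hEP : ∀ p j, E (Sum.inr (Sum.inr p)) j = 0) {z : K}
    (hA : IsUnit (z • (1 : Matrix (S ⊕ C ⊕ P) (S ⊕ C ⊕ P) K) - G).det)
    (hB : IsUnit (z • (1 : Matrix P P K)
      - G.submatrix (Sum.inr ∘ Sum.inr) (Sum.inr ∘ Sum.inr)).det) :
    ((z • 1 - G)⁻¹ * E).submatrix (Sum.inr ∘ Sum.inr) id =
      ((z • 1 - G.submatrix (Sum.inr ∘ Sum.inr) (Sum.inr ∘ Sum.inr))⁻¹
          * G.submatrix (Sum.inr ∘ Sum.inr) (Sum.inr ∘ Sum.inl))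
        * ((z • 1 - G)⁻¹ * E).submatrix (Sum.inr ∘ Sum.inl) id := by
  set R := (z • 1 - G)⁻¹ * E
  have hrow : (z • 1 - G.submatrix (Sum.inr ∘ Sum.inr) (Sum.inr ∘ Sum.inr))
        * R.submatrix (Sum.inr ∘ Sum.inr) id =
      G.submatrix (Sum.inr ∘ Sum.inr) (Sum.inr ∘ Sum.inl) * R.submatrix (Sum.inr ∘ Sum.inl) id := by
    have hE : ((z • 1 - G) * R).submatrix (Sum.inr ∘ Sum.inr) id = 0 := by
      rw [Matrix.mul_nonsing_inv_cancel_left _ _ hA]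
      ext p j
      exact hEP p j
    rw [submatrix_mul_of_block_eq_zero _ _ (by simp [hPS])] at hE
    have hPC : (z • 1 - G).submatrix (Sum.inr ∘ Sum.inr) (Sum.inr ∘ Sum.inl) =
        -G.submatrix (Sum.inr ∘ Sum.inr) (Sum.inr ∘ Sum.inl) := by
      ext; simp
    have hPP : (z • 1 - G).submatrix (Sum.inr ∘ Sum.inr) (Sum.inr ∘ Sum.inr) =
        z • 1 - G.submatrix (Sum.inr ∘ Sum.inr) (Sum.inr ∘ Sum.inr) := by
      ext; simp [Matrix.one_apply]
    rw [hPC, hPP, Matrix.neg_mul, neg_add_eq_zero] at hE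
    exact hE.symm
  rw [Matrix.mul_assoc, ← hrow, Matrix.nonsing_inv_mul_cancel_left _ _ hB]

end BlockRows

theorem stmt16_general {S C P : Type*} [Fintype S] [Fintype C] [Fintype P]
    [DecidableEq S] [DecidableEq C] [DecidableEq P] (r : ℕ)
    (G : Matrix (S ⊕ C ⊕ P) (S ⊕ C ⊕ P) ℝ)
    (hPS : ∀ (p : P) (l : S), G (Sum.inr (Sum.inr p)) (Sum.inl l) = 0)
    (hG : ∀ z : ℂ, ‖z‖ = 1 → z ∉ spectrum ℂ (G.map Complex.ofReal))
    (hGPP : ∀ z : ℂ, ‖z‖ = 1 →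
      z ∉ spectrum ℂ ((G.map Complex.ofReal).submatrix
        (Sum.inr ∘ Sum.inr) (Sum.inr ∘ Sum.inr)))
    (E : Matrix (S ⊕ C ⊕ P) (Fin r) ℝ)
    (hEP : ∀ (p : P) (j : Fin r), E (Sum.inr (Sum.inr p)) j = 0)
    (RC : ℂ → Matrix C (Fin r) ℂ) (RP : ℂ → Matrix P (Fin r) ℂ)
    (T : ℂ → Matrix P C ℂ)
    (hRC : ∀ z : ℂ, RC z =
      (((z • (1 : Matrix (S ⊕ C ⊕ P) (S ⊕ C ⊕ P) ℂ) - G.map Complex.ofReal)⁻¹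
        * E.map Complex.ofReal).submatrix (Sum.inr ∘ Sum.inl) id))
    (hRP : ∀ z : ℂ, RP z =
      (((z • (1 : Matrix (S ⊕ C ⊕ P) (S ⊕ C ⊕ P) ℂ) - G.map Complex.ofReal)⁻¹
        * E.map Complex.ofReal).submatrix (Sum.inr ∘ Sum.inr) id))
    (hT : ∀ z : ℂ, T z =
      ((z • (1 : Matrix P P ℂ)
          - (G.map Complex.ofReal).submatrix (Sum.inr ∘ Sum.inr) (Sum.inr ∘ Sum.inr))⁻¹
        * (G.map Complex.ofReal).submatrix (Sum.inr ∘ Sum.inr) (Sum.inr ∘ Sum.inl))) :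
    ((∀ z : ℂ, ‖z‖ = 1 → opNorm2 (T z) ≤ 1) →
      sSup {x : ℝ | ∃ z : ℂ, ‖z‖ = 1 ∧ x = opNorm2 (RP z)}
        ≤ sSup {x : ℝ | ∃ z : ℂ, ‖z‖ = 1 ∧ x = opNorm2 (RC z)}) ∧
    ((∃ c : ℝ, 1 < c ∧ ∀ z : ℂ, ‖z‖ = 1 → ∀ d : C → ℂ,
        c * ∑ i, ‖d i‖ ^ 2 ≤ ∑ i, ‖(T z).mulVec d i‖ ^ 2) →
      sSup {x : ℝ | ∃ z : ℂ, ‖z‖ = 1 ∧ x = opNorm2 (RC z)}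
        ≤ sSup {x : ℝ | ∃ z : ℂ, ‖z‖ = 1 ∧ x = opNorm2 (RP z)}) := by
  have hRP_eq : ∀ z : ℂ, ‖z‖ = 1 → RP z = T z * RC z := fun z hz => by
    rw [hRP, hRC, hT]
    exact resolvent_mul_submatrix_eq (by simp [hPS]) (by simp [hEP])
      (isUnit_det_smul_one_sub_of_notMem_spectrum (hG z hz))
      (isUnit_det_smul_one_sub_of_notMem_spectrum (hGPP z hz))
  have hcircle : ∃ z : ℂ, ‖z‖ = 1 := ⟨1, norm_one⟩
  refine ⟨fun hTle => ?_, fun ⟨c, hc, hcT⟩ => ?_⟩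
  · refine csSup_le_csSup_of_forall_le hcircle
      (by simpa only [hRC] using bddAbove_opNorm2_resolvent_mul_submatrix _ _ _ hG)
      fun z hz => ?_
    rw [hRP_eq z hz]
    exact (opNorm2_mul_le _ _).trans (mul_le_of_le_one_left (norm_nonneg _) (hTle z hz))
  · refine csSup_le_csSup_of_forall_le hcircle
      (by simpa only [hRP] using bddAbove_opNorm2_resolvent_mul_submatrix _ _ _ hG)
      fun z hz => ?_
    rw [hRP_eq z hz]
    refine opNorm2_le_opNorm2_mul (fun d => ?_) _
    exact (le_mul_of_one_le_left (by positivity) hc.le).trans (hcT z hz d)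

/-- With indices partitioned into `S ⊕ C ⊕ P`, `G` real with zero
`(P, S)` block, no eigenvalue of `G` nor of `G_{PP}` on the complex unit circle, and `E` a
real input matrix whose rows on `C` and `P` vanish, define for `|z| = 1` (over `ℂ`)
`R(z) = (z I - G)⁻¹ E` with row restrictions `R_C(z)`, `R_P(z)`, and
`T(z) = (z I_P - G_{PP})⁻¹ G_{PC}`. Then: (a) if `sup_{|z|=1} σ_max(T(z)) ≤ 1`, then
`sup_{|z|=1} ‖R_P(z)‖₂ ≤ sup_{|z|=1} ‖R_C(z)‖₂`; (b) if `inf_{|z|=1} σ_min(T(z)) > 1`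
(i.e. `‖T(z) d‖₂² ≥ c ‖d‖₂²` for some `c > 1`, all unit-modulus `z` and all `d`), then
`sup_{|z|=1} ‖R_P(z)‖₂ ≥ sup_{|z|=1} ‖R_C(z)‖₂`. -/
theorem stmt16 {S C P : Type*} [Fintype S] [Fintype C] [Fintype P]
    [DecidableEq S] [DecidableEq C] [DecidableEq P] (r : ℕ)
    (G : Matrix (S ⊕ C ⊕ P) (S ⊕ C ⊕ P) ℝ)
    (hPS : ∀ (p : P) (l : S), G (Sum.inr (Sum.inr p)) (Sum.inl l) = 0)
    (hG : ∀ z : ℂ, ‖z‖ = 1 → z ∉ spectrum ℂ (G.map Complex.ofReal))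
    (hGPP : ∀ z : ℂ, ‖z‖ = 1 →
      z ∉ spectrum ℂ ((G.map Complex.ofReal).submatrix
        (Sum.inr ∘ Sum.inr) (Sum.inr ∘ Sum.inr)))
    (E : Matrix (S ⊕ C ⊕ P) (Fin r) ℝ)
    (hEC : ∀ (c : C) (j : Fin r), E (Sum.inr (Sum.inl c)) j = 0)
    (hEP : ∀ (p : P) (j : Fin r), E (Sum.inr (Sum.inr p)) j = 0)
    (RC : ℂ → Matrix C (Fin r) ℂ) (RP : ℂ → Matrix P (Fin r) ℂ)
    (T : ℂ → Matrix P C ℂ)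
    (hRC : ∀ z : ℂ, RC z =
      (((z • (1 : Matrix (S ⊕ C ⊕ P) (S ⊕ C ⊕ P) ℂ) - G.map Complex.ofReal)⁻¹
        * E.map Complex.ofReal).submatrix (Sum.inr ∘ Sum.inl) id))
    (hRP : ∀ z : ℂ, RP z =
      (((z • (1 : Matrix (S ⊕ C ⊕ P) (S ⊕ C ⊕ P) ℂ) - G.map Complex.ofReal)⁻¹
        * E.map Complex.ofReal).submatrix (Sum.inr ∘ Sum.inr) id))
    (hT : ∀ z : ℂ, T z =
      ((z • (1 : Matrix P P ℂ)
          - (G.map Complex.ofReal).submatrix (Sum.inr ∘ Sum.inr) (Sum.inr ∘ Sum.inr))⁻¹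
        * (G.map Complex.ofReal).submatrix (Sum.inr ∘ Sum.inr) (Sum.inr ∘ Sum.inl))) :
    ((∀ z : ℂ, ‖z‖ = 1 → opNorm2 (T z) ≤ 1) →
      sSup {x : ℝ | ∃ z : ℂ, ‖z‖ = 1 ∧ x = opNorm2 (RP z)}
        ≤ sSup {x : ℝ | ∃ z : ℂ, ‖z‖ = 1 ∧ x = opNorm2 (RC z)}) ∧
    ((∃ c : ℝ, 1 < c ∧ ∀ z : ℂ, ‖z‖ = 1 → ∀ d : C → ℂ,
        c * ∑ i, ‖d i‖ ^ 2 ≤ ∑ i, ‖(T z).mulVec d i‖ ^ 2) →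
      sSup {x : ℝ | ∃ z : ℂ, ‖z‖ = 1 ∧ x = opNorm2 (RC z)}
        ≤ sSup {x : ℝ | ∃ z : ℂ, ‖z‖ = 1 ∧ x = opNorm2 (RP z)}) :=
  stmt16_general r G hPS hG hGPP E hEP RC RP T hRC hRP hT
end
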